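/- arXiv:math/0609665 — 4 statements merged into one kernel-verified Lean document; each statement's English description precedes it below -/
import Mathlib

section
/- The graph K is not homotopy equivalent to any separable topological space: if X is a topological space with a countable dense subset, then there is no homotopy equivalence between X and K. -/
/-- The setoid on `Σ α : ℝ, Icc (0:ℝ) 1` generated by identifying all points `⟨α, 0⟩`
with each other and all points `⟨α, 1⟩` with each other. -/
def graphSetoid : Setoid (Σ _ : ℝ, (Set.Icc (0:ℝ) 1)) where
  r p q := p = q ∨ ((p.2 : ℝ) = 0 ∧ (q.2 : ℝ) = 0) ∨ ((p.2 : ℝ) = 1 ∧ (q.2 : ℝ) = 1)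
  iseqv := by
    constructor
    · intro p; exact Or.inl rfl
    · rintro p q (rfl | ⟨h1, h2⟩ | ⟨h1, h2⟩)
      · exact Or.inl rfl
      · exact Or.inr (Or.inl ⟨h2, h1⟩)
      · exact Or.inr (Or.inr ⟨h2, h1⟩)
    · rintro p q r (rfl | ⟨h1, h2⟩ | ⟨h1, h2⟩) h
      · exact h
      · rcases h with rfl | ⟨k1, k2⟩ | ⟨k1, k2⟩
        · exact Or.inr (Or.inl ⟨h1, h2⟩)
        · exact Or.inr (Or.inl ⟨h1, k2⟩)
        · exact absurd (h2.symm.trans k1) (by norm_num)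
      · rcases h with rfl | ⟨k1, k2⟩ | ⟨k1, k2⟩
        · exact Or.inr (Or.inr ⟨h1, h2⟩)
        · exact absurd (h2.symm.trans k1) (by norm_num)
        · exact Or.inr (Or.inr ⟨h1, k2⟩)

/-- The graph `K`: two vertices joined by a continuum of edges indexed by `ℝ`,
with the quotient (weak/CW) topology. -/
def GraphK : Type := Quotient graphSetoid

instance : TopologicalSpace GraphK :=
  inferInstanceAs (TopologicalSpace (Quotient graphSetoid))


open Complex Set Finset

noncomputable def wrap (t : ℝ) : ℂ := Complex.exp ((2 * Real.pi * t : ℝ) * I)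

lemma wrap_zero : wrap 0 = 1 := by simp [wrap]

lemma wrap_one : wrap 1 = 1 := by
  have := Complex.exp_two_pi_mul_I
  simpa [wrap] using this

lemma abs_wrap (t : ℝ) : ‖wrap t‖ = 1 := Complex.norm_exp_ofReal_mul_I _

lemma wrap_continuous : Continuous wrap := by
  unfold wrap
  fun_prop

lemma exp_arg_unit (u : ℂ) (h : ‖u‖ = 1) : Complex.exp (↑(Complex.arg u) * I) = u := by
  have := Complex.norm_mul_exp_arg_mul_I u
  rw [h] at this
  simpa using this

lemma unit_prox_slit {z w : ℂ} (hz : ‖z‖ = 1) (hw : ‖w‖ = 1)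
    (hzw : ‖z - w‖ < 1) : z * (starRingEnd ℂ) w ∈ Complex.slitPlane := by
  rw [Complex.mem_slitPlane_iff]
  by_contra hcon
  push_neg at hcon
  obtain ⟨hre, him⟩ := hcon
  set u := z * (starRingEnd ℂ) w with hu
  have habs : ‖u‖ = 1 := by
    rw [hu, norm_mul, Complex.norm_conj, hz, hw, one_mul]
  have hue : u = (u.re : ℂ) := Complex.ext rfl (by simpa using him)
  have hre1 : |u.re| = 1 := by
    rw [hue] at habs; simpa using habs
  have hreneg : u.re = -1 := by
    rcases abs_eq (by norm_num : (0:ℝ) ≤ 1) |>.mp hre1 with h | h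
    · exfalso; rw [h] at hre; norm_num at hre
    · exact h
  have hun : u = -1 := by rw [hue, hreneg]; norm_num
  have hwu : w * (starRingEnd ℂ) w = 1 := by
    rw [Complex.mul_conj]
    norm_cast
    rw [Complex.normSq_eq_norm_sq, hw]; norm_num
  have hzw' : z = -w := by
    have h1 : u * w = -w := by rw [hun]; ring
    rw [hu] at h1
    calc z = z * (w * (starRingEnd ℂ) w) := by rw [hwu, mul_one]
    _ = z * (starRingEnd ℂ) w * w := by ring
    _ = -w := h1
  rw [hzw'] at hzw
  have : ‖-w - w‖ = 2 := by
    have : -w - w = -(2 * w) := by ring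
    rw [this, norm_neg, norm_mul, hw]
    simp
  rw [this] at hzw; norm_num at hzw

lemma telescope (a : ℕ → ℂ) (ha : ∀ j, ‖a j‖ = 1) (n : ℕ) :
    ∏ j ∈ Finset.range n, (a (j + 1) * (starRingEnd ℂ) (a j)) = a n * (starRingEnd ℂ) (a 0) := by
  induction n with
  | zero =>
    simp only [Finset.range_zero, Finset.prod_empty]
    rw [Complex.mul_conj]
    norm_cast
    rw [Complex.normSq_eq_norm_sq, ha 0]; norm_num
  | succ n ih =>
    rw [Finset.prod_range_succ, ih]
    have h : a n * (starRingEnd ℂ) (a n) = 1 := by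
      rw [Complex.mul_conj]
      norm_cast
      rw [Complex.normSq_eq_norm_sq, ha n]; norm_num
    linear_combination a (n + 1) * (starRingEnd ℂ) (a 0) * h

lemma min_lip_aux (t a b : ℝ) : min t a - min t b ≤ |a - b| := by
  rcases le_total a b with hab | hab
  · have h1 := min_le_min (le_refl t) hab
    have h2 := abs_nonneg (a - b)
    linarith
  · rcases le_total t b with h | h
    · rw [min_eq_left h, min_eq_left (h.trans hab)]
      simp [abs_nonneg]
    · rw [min_eq_right h]
      have h1 : min t a ≤ a := min_le_right _ _
      have h2 : |a - b| = a - b := _root_.abs_of_nonneg (by linarith)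
      linarith

lemma min_lip (t a b : ℝ) : |min t a - min t b| ≤ |a - b| := by
  rw [abs_sub_le_iff]
  refine ⟨min_lip_aux t a b, ?_⟩
  rw [abs_sub_comm]
  exact min_lip_aux t b a

lemma int_valued_const (g : ℝ → ℝ) (hg : ContinuousOn g (Set.Icc 0 1))
    (hint : ∀ s ∈ Set.Icc (0:ℝ) 1, ∃ k : ℤ, g s = 2 * Real.pi * k) : g 1 = g 0 := by
  have pi_pos := Real.pi_pos
  have key : ∀ h : ℝ → ℝ, ContinuousOn h (Set.Icc 0 1) →
      (∀ s ∈ Set.Icc (0:ℝ) 1, ∃ k : ℤ, h s = 2 * Real.pi * k) → ¬ (h 0 < h 1) := by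
    intro h hc hi hlt
    obtain ⟨k0, hk0⟩ := hi 0 (by norm_num)
    obtain ⟨k1, hk1⟩ := hi 1 (by norm_num)
    have hkk : (k0 : ℝ) < k1 := by
      rw [hk0, hk1] at hlt; nlinarith
    have hkk' : (k0 : ℝ) + 1 ≤ k1 := by exact_mod_cast (by exact_mod_cast hkk : k0 < k1)
    have hmem : 2 * Real.pi * k0 + Real.pi ∈ Set.Icc (h 0) (h 1) := by
      constructor
      · rw [hk0]; linarith
      · rw [hk1]; nlinarith
    obtain ⟨s, hs, hgs⟩ := intermediate_value_Icc (by norm_num : (0:ℝ) ≤ 1) hc hmem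
    obtain ⟨k, hk⟩ := hi s hs
    rw [hk] at hgs
    have hz : ((2 * k - 2 * k0 - 1 : ℤ) : ℝ) * Real.pi = 0 := by push_cast; linarith
    rcases mul_eq_zero.mp hz with h' | h'
    · have : (2 * k - 2 * k0 - 1 : ℤ) = 0 := by exact_mod_cast h'
      omega
    · linarith
  rcases lt_trichotomy (g 0) (g 1) with h | h | h
  · exact absurd h (key g hg hint)
  · exact h.symm
  · exfalso
    refine key (fun s => -g s) (hg.neg) (fun s hs => ?_) (by simpa using h)
    obtain ⟨k, hk⟩ := hint s hs
    exact ⟨-k, by push_cast; linarith⟩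

lemma no_winding (V : ℝ × ℝ → ℂ) (hV : Continuous V)
    (hunit : ∀ p, ‖V p‖ = 1)
    (hbot : ∀ t, V (t, 0) = 1)
    (hloop : ∀ s, V (0, s) = V (1, s))
    (σ : ℝ → ℝ) (hσ : Continuous σ) (hσ0 : σ 0 = 0) (hσ1 : σ 1 = 1)
    (htop : ∀ t, V (t, 1) = wrap (σ t)) : False := by
  classical
  have pi_pos := Real.pi_pos
  -- uniform continuity on the unit square
  set Q : Set (ℝ × ℝ) := (Set.Icc 0 1) ×ˢ (Set.Icc 0 1) with hQdef
  have hQ : IsCompact Q := isCompact_Icc.prod isCompact_Icc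
  have UC := hQ.uniformContinuousOn_of_continuous hV.continuousOn
  rw [Metric.uniformContinuousOn_iff] at UC
  obtain ⟨δ, hδ, hδ'⟩ := UC 1 one_pos
  obtain ⟨n, hn⟩ := exists_nat_one_div_lt hδ
  set m : ℕ := n + 1 with hmdef
  have hm : (1 : ℝ) / m < δ := by exact_mod_cast hn
  have hm0 : (0:ℝ) < (m:ℝ) := by positivity
  -- the grid approximation to a lift
  set A : ℝ → ℝ → ℕ → ℂ := fun t s j => V (min t (j / m), s) with hA
  set B : ℝ → ℕ → ℂ := fun s j => V (0, min s (j / m)) with hB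
  set F : ℝ → ℝ → ℝ := fun t s =>
    (∑ j ∈ Finset.range m, Complex.arg (A t s (j + 1) * (starRingEnd ℂ) (A t s j))) +
    (∑ j ∈ Finset.range m, Complex.arg (B s (j + 1) * (starRingEnd ℂ) (B s j))) with hF
  have hmemQ : ∀ {t s : ℝ}, t ∈ Set.Icc (0:ℝ) 1 → s ∈ Set.Icc (0:ℝ) 1 → (t, s) ∈ Q := by
    intro t s ht hs; exact ⟨ht, hs⟩
  have hminmem : ∀ {t : ℝ} (j : ℕ), t ∈ Set.Icc (0:ℝ) 1 → min t ((j:ℝ) / m) ∈ Set.Icc (0:ℝ) 1 := by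
    intro t j ht
    constructor
    · exact le_min ht.1 (by positivity)
    · exact le_trans (min_le_left _ _) ht.2
  have hgrid : ∀ (j : ℕ), |(((j:ℕ)+1:ℕ):ℝ) / m - (j:ℝ) / m| ≤ 1 / m := by
    intro j
    push_cast
    rw [div_sub_div_same, show ((j:ℝ) + 1 - j) = 1 by ring]
    exact le_of_eq (_root_.abs_of_nonneg (by positivity))
  have closeA : ∀ {t s : ℝ}, t ∈ Set.Icc (0:ℝ) 1 → s ∈ Set.Icc (0:ℝ) 1 → ∀ j : ℕ,
      ‖A t s (j + 1) - A t s j‖ < 1 := by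
    intro t s ht hs j
    have h1 : (min t ((((j+1):ℕ):ℝ) / m), s) ∈ Q := ⟨hminmem (j+1) ht, hs⟩
    have h2 : (min t (((j:ℕ):ℝ) / m), s) ∈ Q := ⟨hminmem j ht, hs⟩
    have hd : dist (min t ((((j+1):ℕ):ℝ) / m), s) (min t (((j:ℕ):ℝ) / m), s) < δ := by
      rw [Prod.dist_eq]
      simp only [dist_self]
      rw [max_eq_left dist_nonneg, Real.dist_eq]
      calc |min t ((((j+1):ℕ):ℝ) / m) - min t (((j:ℕ):ℝ) / m)|
          ≤ |(((j+1):ℕ):ℝ) / m - ((j:ℕ):ℝ) / m| := min_lip _ _ _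
        _ ≤ 1 / m := hgrid j
        _ < δ := hm
    have := hδ' _ h1 _ h2 hd
    rw [Complex.dist_eq] at this
    simpa [hA] using this
  have closeB : ∀ {s : ℝ}, s ∈ Set.Icc (0:ℝ) 1 → ∀ j : ℕ,
      ‖B s (j + 1) - B s j‖ < 1 := by
    intro s hs j
    have h1 : ((0:ℝ), min s ((((j+1):ℕ):ℝ) / m)) ∈ Q := ⟨by norm_num, hminmem (j+1) hs⟩
    have h2 : ((0:ℝ), min s (((j:ℕ):ℝ) / m)) ∈ Q := ⟨by norm_num, hminmem j hs⟩
    have hd : dist ((0:ℝ), min s ((((j+1):ℕ):ℝ) / m)) ((0:ℝ), min s (((j:ℕ):ℝ) / m)) < δ := by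
      rw [Prod.dist_eq]
      simp only [dist_self]
      rw [max_eq_right dist_nonneg, Real.dist_eq]
      calc |min s ((((j+1):ℕ):ℝ) / m) - min s (((j:ℕ):ℝ) / m)|
          ≤ |(((j+1):ℕ):ℝ) / m - ((j:ℕ):ℝ) / m| := min_lip _ _ _
        _ ≤ 1 / m := hgrid j
        _ < δ := hm
    have := hδ' _ h1 _ h2 hd
    rw [Complex.dist_eq] at this
    simpa [hB] using this
  -- the exponential identity
  have unitA : ∀ t s j, ‖A t s j‖ = 1 := fun t s j => hunit _
  have unitB : ∀ s j, ‖B s j‖ = 1 := fun s j => hunit _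
  have expF : ∀ {t s : ℝ}, t ∈ Set.Icc (0:ℝ) 1 → s ∈ Set.Icc (0:ℝ) 1 →
      Complex.exp (↑(F t s) * I) = V (t, s) := by
    intro t s ht hs
    have e1 : Complex.exp (↑(F t s) * I) =
        (∏ j ∈ Finset.range m, Complex.exp (↑(Complex.arg (A t s (j+1) * (starRingEnd ℂ) (A t s j))) * I)) *
        (∏ j ∈ Finset.range m, Complex.exp (↑(Complex.arg (B s (j+1) * (starRingEnd ℂ) (B s j))) * I)) := by
      rw [hF]
      push_cast
      rw [add_mul, Complex.exp_add, Finset.sum_mul, Finset.sum_mul, Complex.exp_sum, Complex.exp_sum]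
    have habsA : ∀ j, ‖A t s (j+1) * (starRingEnd ℂ) (A t s j)‖ = 1 := by
      intro j; rw [norm_mul, Complex.norm_conj, unitA, unitA, one_mul]
    have habsB : ∀ j, ‖B s (j+1) * (starRingEnd ℂ) (B s j)‖ = 1 := by
      intro j; rw [norm_mul, Complex.norm_conj, unitB, unitB, one_mul]
    rw [e1]
    have e2 : ∀ j, Complex.exp (↑(Complex.arg (A t s (j+1) * (starRingEnd ℂ) (A t s j))) * I) =
        A t s (j+1) * (starRingEnd ℂ) (A t s j) := fun j => exp_arg_unit _ (habsA j)
    have e3 : ∀ j, Complex.exp (↑(Complex.arg (B s (j+1) * (starRingEnd ℂ) (B s j))) * I) =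
        B s (j+1) * (starRingEnd ℂ) (B s j) := fun j => exp_arg_unit _ (habsB j)
    rw [Finset.prod_congr rfl (fun j _ => e2 j), Finset.prod_congr rfl (fun j _ => e3 j)]
    rw [telescope _ (unitA t s) m, telescope _ (unitB s) m]
    have hAm : A t s m = V (t, s) := by
      rw [hA]
      simp only
      rw [div_self (ne_of_gt hm0), min_eq_left ht.2]
    have hA0 : A t s 0 = V (0, s) := by
      rw [hA]
      simp only [Nat.cast_zero, zero_div]
      rw [min_eq_right ht.1]
    have hBm : B s m = V (0, s) := by
      rw [hB]
      simp only
      rw [div_self (ne_of_gt hm0), min_eq_left hs.2]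
    have hB0 : B s 0 = V (0, 0) := by
      rw [hB]
      simp only [Nat.cast_zero, zero_div]
      rw [min_eq_right hs.1]
    rw [hAm, hA0, hBm, hB0, hbot 0]
    have hVs : V (0, s) * (starRingEnd ℂ) (V (0, s)) = 1 := by
      rw [Complex.mul_conj]
      norm_cast
      rw [Complex.normSq_eq_norm_sq, hunit]; norm_num
    rw [map_one]
    linear_combination V (t, s) * hVs
  -- continuity of F on the square
  have contF : ∀ p ∈ Q, ContinuousAt (fun p : ℝ × ℝ => F p.1 p.2) p := by
    rintro ⟨t, s⟩ ⟨ht, hs⟩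
    have contA : ∀ j : ℕ, Continuous (fun p : ℝ × ℝ =>
        A p.1 p.2 (j+1) * (starRingEnd ℂ) (A p.1 p.2 j)) := by
      intro j
      apply Continuous.mul
      · exact hV.comp ((continuous_fst.min continuous_const).prodMk continuous_snd)
      · exact Complex.continuous_conj.comp (hV.comp ((continuous_fst.min continuous_const).prodMk continuous_snd))
    have contB : ∀ j : ℕ, Continuous (fun p : ℝ × ℝ =>
        B p.2 (j+1) * (starRingEnd ℂ) (B p.2 j)) := by
      intro j
      apply Continuous.mul
      · exact hV.comp (continuous_const.prodMk (continuous_snd.min continuous_const))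
      · exact Complex.continuous_conj.comp (hV.comp (continuous_const.prodMk (continuous_snd.min continuous_const)))
    have slitA : ∀ j : ℕ, A t s (j+1) * (starRingEnd ℂ) (A t s j) ∈ Complex.slitPlane :=
      fun j => unit_prox_slit (unitA t s (j+1)) (unitA t s j) (closeA ht hs j)
    have slitB : ∀ j : ℕ, B s (j+1) * (starRingEnd ℂ) (B s j) ∈ Complex.slitPlane :=
      fun j => unit_prox_slit (unitB s (j+1)) (unitB s j) (closeB hs j)
    apply ContinuousAt.add
    · apply tendsto_finset_sum
      intro j _
      exact ContinuousAt.comp (x := ((t, s) : ℝ × ℝ)) (g := Complex.arg)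
        (f := fun p : ℝ × ℝ => A p.1 p.2 (j+1) * (starRingEnd ℂ) (A p.1 p.2 j))
        (Complex.continuousAt_arg (slitA j)) (contA j).continuousAt
    · apply tendsto_finset_sum
      intro j _
      exact ContinuousAt.comp (x := ((t, s) : ℝ × ℝ)) (g := Complex.arg)
        (f := fun p : ℝ × ℝ => B p.2 (j+1) * (starRingEnd ℂ) (B p.2 j))
        (Complex.continuousAt_arg (slitB j)) (contB j).continuousAt
  -- F vanishes at s = 0
  have hF0 : ∀ t, F t 0 = 0 := by
    intro t
    rw [hF]
    simp only
    rw [Finset.sum_eq_zero, Finset.sum_eq_zero, add_zero]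
    · intro j _
      have h1 : B 0 (j + 1) = 1 := by
        rw [hB]; simp only
        rw [min_eq_left (by positivity), hbot 0]
      have h2 : B 0 j = 1 := by
        rw [hB]; simp only
        rw [min_eq_left (by positivity), hbot 0]
      rw [h1, h2, map_one, mul_one, Complex.arg_one]
    · intro j _
      have h1 : A t 0 (j + 1) = 1 := hbot _
      have h2 : A t 0 j = 1 := hbot _
      rw [h1, h2, map_one, mul_one, Complex.arg_one]
  -- the displacement function
  have h0mem : (0:ℝ) ∈ Set.Icc (0:ℝ) 1 := by norm_num
  have h1mem : (1:ℝ) ∈ Set.Icc (0:ℝ) 1 := by norm_num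
  set d : ℝ → ℝ := fun s => F 1 s - F 0 s with hd
  have hdc : ContinuousOn d (Set.Icc 0 1) := by
    apply continuousOn_of_forall_continuousAt
    intro s hs
    apply ContinuousAt.sub
    · exact ContinuousAt.comp (x := s) (g := fun p : ℝ × ℝ => F p.1 p.2)
        (f := fun s : ℝ => ((1:ℝ), s)) (contF (1, s) ⟨h1mem, hs⟩)
        ((continuous_const.prodMk continuous_id).continuousAt)
    · exact ContinuousAt.comp (x := s) (g := fun p : ℝ × ℝ => F p.1 p.2)
        (f := fun s : ℝ => ((0:ℝ), s)) (contF (0, s) ⟨h0mem, hs⟩)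
        ((continuous_const.prodMk continuous_id).continuousAt)
  have exp_diff : ∀ (x y : ℝ), Complex.exp (↑(x - y) * Complex.I) =
      Complex.exp (↑x * Complex.I) / Complex.exp (↑y * Complex.I) := by
    intro x y
    rw [← Complex.exp_sub]
    congr 1
    push_cast
    ring
  have hVne : ∀ p, V p ≠ 0 := by
    intro p hp
    have := hunit p
    rw [hp] at this
    simp at this
  have key_int : ∀ (x y : ℝ), Complex.exp (↑x * Complex.I) = Complex.exp (↑y * Complex.I) →
      ∃ k : ℤ, x - y = 2 * Real.pi * k := by
    intro x y hxy
    have h1 : Complex.exp (↑(x - y) * Complex.I) = 1 := by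
      rw [exp_diff, hxy, div_self (Complex.exp_ne_zero _)]
    rw [Complex.exp_eq_one_iff] at h1
    obtain ⟨k, hk⟩ := h1
    refine ⟨k, ?_⟩
    have h2 : (↑(x - y) : ℂ) = ↑(2 * Real.pi * (k:ℝ)) := by
      apply mul_right_cancel₀ Complex.I_ne_zero
      rw [hk]
      push_cast
      ring
    exact_mod_cast h2
  have hdint : ∀ s ∈ Set.Icc (0:ℝ) 1, ∃ k : ℤ, d s = 2 * Real.pi * k := by
    intro s hs
    refine key_int _ _ ?_
    rw [expF h1mem hs, expF h0mem hs, hloop s]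
  have hd0 : d 0 = 0 := by rw [hd]; simp [hF0]
  have hd1 : d 1 = 2 * Real.pi := by
    set G : ℝ → ℝ := fun t => F t 1 - 2 * Real.pi * σ t with hG
    have hGc : ContinuousOn G (Set.Icc 0 1) := by
      apply continuousOn_of_forall_continuousAt
      intro t ht
      apply ContinuousAt.sub
      · exact ContinuousAt.comp (x := t) (g := fun p : ℝ × ℝ => F p.1 p.2)
          (f := fun t : ℝ => (t, (1:ℝ))) (contF (t, 1) ⟨ht, h1mem⟩)
          ((continuous_id.prodMk continuous_const).continuousAt)
      · exact ((continuous_const.mul hσ).continuousAt)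
    have hGint : ∀ t ∈ Set.Icc (0:ℝ) 1, ∃ k : ℤ, G t = 2 * Real.pi * k := by
      intro t ht
      refine key_int _ _ ?_
      rw [expF ht h1mem, htop t]
      rfl
    have := int_valued_const G hGc hGint
    rw [hG] at this
    simp only [hσ0, hσ1] at this
    rw [hd]
    simp only
    linarith
  have := int_valued_const d hdc hdint
  rw [hd0, hd1] at this
  linarith

-- quotient map basics
lemma graphK_qm : Topology.IsQuotientMap (Quotient.mk graphSetoid) :=
  isQuotientMap_quot_mk

lemma graphK_mk_continuous : Continuous (Quotient.mk graphSetoid) := graphK_qm.continuous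

/-- The circle-valued test map wrapping edge `β` once and collapsing all other edges. -/
noncomputable def phi (β : ℝ) : GraphK → ℂ :=
  Quotient.lift (fun p : Σ _ : ℝ, (Set.Icc (0:ℝ) 1) => if p.1 = β then wrap (p.2 : ℝ) else 1)
    (by
      rintro a b (rfl | ⟨h1, h2⟩ | ⟨h1, h2⟩)
      · rfl
      · split_ifs <;> simp [h1, h2, wrap_zero]
      · split_ifs <;> simp [h1, h2, wrap_one])

lemma phi_continuous (β : ℝ) : Continuous (phi β) := by
  apply Continuous.quotient_lift
  rw [continuous_sigma_iff]
  intro α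
  dsimp only [Function.comp]
  by_cases hα : α = β
  · subst hα
    simp only [if_pos rfl]
    exact wrap_continuous.comp continuous_subtype_val
  · simp only [if_neg hα]
    exact continuous_const

lemma phi_abs (β : ℝ) (y : GraphK) : ‖phi β y‖ = 1 := by
  induction y using Quotient.ind with
  | _ p =>
    show ‖if p.1 = β then wrap (p.2 : ℝ) else 1‖ = 1
    split_ifs
    · exact abs_wrap _
    · simp

/-- The loop going up edge `β` and back down edge `0`. -/
noncomputable def ell (β : ℝ) : ℝ → GraphK := fun t =>
  if t ≤ 1/2 then Quotient.mk graphSetoid ⟨β, Set.projIcc 0 1 zero_le_one (2*t)⟩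
  else Quotient.mk graphSetoid ⟨(0:ℝ), Set.projIcc 0 1 zero_le_one (2 - 2*t)⟩

lemma ell_continuous (β : ℝ) : Continuous (ell β) := by
  apply Continuous.if_le
  · exact graphK_mk_continuous.comp (continuous_sigmaMk.comp (continuous_projIcc.comp (by fun_prop)))
  · exact graphK_mk_continuous.comp (continuous_sigmaMk.comp (continuous_projIcc.comp (by fun_prop)))
  · exact continuous_id
  · exact continuous_const
  · intro t ht
    subst ht
    apply Quotient.sound
    refine Or.inr (Or.inr ⟨?_, ?_⟩) <;>
      · rw [Set.coe_projIcc]; norm_num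

lemma phi_ell (β : ℝ) (hβ : β ≠ 0) (t : ℝ) :
    phi β (ell β t) = wrap (max 0 (min 1 (2*t))) := by
  unfold ell
  split_ifs with h
  · refine (congrArg (phi β) (if_pos h)).trans ?_
    show (if β = β then wrap ((Set.projIcc 0 1 zero_le_one (2*t) : Set.Icc (0:ℝ) 1) : ℝ) else 1) = _
    rw [if_pos rfl, Set.coe_projIcc]
  · refine (congrArg (phi β) (if_neg h)).trans ?_
    show (if (0:ℝ) = β then wrap ((Set.projIcc 0 1 zero_le_one (2-2*t) : Set.Icc (0:ℝ) 1) : ℝ) else 1) = _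
    rw [if_neg (fun hc => hβ hc.symm)]
    have h1 : min 1 (2*t) = 1 := min_eq_left (by push_neg at h; linarith)
    rw [h1]
    norm_num [wrap_one]

lemma ell_loop (β : ℝ) : ell β 0 = ell β 1 := by
  unfold ell
  norm_num
  apply Quotient.sound
  exact Or.inr (Or.inl ⟨by simp, by simp⟩)

/-- The graph `K` is not homotopy equivalent to any separable topological space. -/
theorem graphK_not_homotopyEquiv_separable (X : Type u) [TopologicalSpace X]
    [TopologicalSpace.SeparableSpace X] :
    IsEmpty (ContinuousMap.HomotopyEquiv X GraphK) := by
  constructor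
  intro e
  obtain ⟨D, hDc, hDd⟩ := TopologicalSpace.exists_countable_dense X
  obtain ⟨H⟩ := e.right_inv
  set C : Set GraphK := ⇑e.toFun '' D with hC
  set A : Set ℝ := (fun c : GraphK => (Quotient.out c).1) '' C with hAdef
  have hAc : (A ∪ {0}).Countable := ((hDc.image _).image _).union (Set.countable_singleton 0)
  have hne : (A ∪ {0} : Set ℝ) ≠ Set.univ := by
    intro h
    exact Cardinal.not_countable_real (h ▸ hAc)
  obtain ⟨β, hβ⟩ := (Set.ne_univ_iff_exists_notMem _).mp hne
  have hβA : β ∉ A := fun h => hβ (Or.inl h)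
  have hβ0 : β ≠ 0 := fun h => hβ (Or.inr (by simp [h]))
  -- the closed countable subcomplex that contains the image of `e.toFun`
  set S : Set (Σ _ : ℝ, (Set.Icc (0:ℝ) 1)) :=
    {p | p.1 ∈ A ∨ (p.2 : ℝ) = 0 ∨ (p.2 : ℝ) = 1} with hS
  have hSpre : Quotient.mk graphSetoid ⁻¹' (Quotient.mk graphSetoid '' S) = S := by
    ext p
    simp only [Set.mem_preimage]
    constructor
    · rintro ⟨p', hp', hpq⟩
      rcases Quotient.exact hpq with rfl | ⟨h1, h2⟩ | ⟨h1, h2⟩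
      · exact hp'
      · exact Or.inr (Or.inl h2)
      · exact Or.inr (Or.inr h2)
    · intro hp
      exact ⟨p, hp, rfl⟩
  have hSclosed : IsClosed S := by
    rw [isClosed_sigma_iff]
    intro α
    by_cases hα : α ∈ A
    · convert isClosed_univ
      ext x; simp [hS, hα]
    · have heq : (Sigma.mk α ⁻¹' S) = (Subtype.val : Set.Icc (0:ℝ) 1 → ℝ) ⁻¹' {0, 1} := by
        ext x; simp [hS, hα]
      rw [heq]
      exact (((Set.finite_singleton (1:ℝ)).insert 0).isClosed).preimage continuous_subtype_val
  have hWclosed : IsClosed (Quotient.mk graphSetoid '' S) := by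
    rw [← graphK_qm.isClosed_preimage, hSpre]
    exact hSclosed
  have hCsub : C ⊆ Quotient.mk graphSetoid '' S := by
    intro c hc
    exact ⟨Quotient.out c, Or.inl (Set.mem_image_of_mem _ hc), Quotient.out_eq c⟩
  have hrange : ∀ y : GraphK, e.toFun (e.invFun y) ∈ Quotient.mk graphSetoid '' S := by
    intro y
    have h1 : e.invFun y ∈ closure D := by rw [hDd.closure_eq]; trivial
    have h2 : e.toFun (e.invFun y) ∈ closure C :=
      (image_closure_subset_closure_image e.toFun.continuous) (Set.mem_image_of_mem _ h1)
    exact closure_minimal hCsub hWclosed h2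
  have hf1 : ∀ y : GraphK, phi β (e.toFun (e.invFun y)) = 1 := by
    intro y
    obtain ⟨p, hpS, hpeq⟩ := hrange y
    rw [← hpeq]
    show (if p.1 = β then wrap (p.2 : ℝ) else 1) = 1
    by_cases hpb : p.1 = β
    · rw [if_pos hpb]
      rcases hpS with h | h | h
      · exact absurd (hpb ▸ h) hβA
      · rw [h, wrap_zero]
      · rw [h, wrap_one]
    · rw [if_neg hpb]
  -- build the homotopy square and conclude via the winding argument
  set σfun : ℝ → ℝ := fun t => max 0 (min 1 (2*t)) with hσfun
  set V : ℝ × ℝ → ℂ := fun ts =>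
    phi β (H (Set.projIcc 0 1 zero_le_one ts.2, ell β ts.1)) with hV
  have proj0 : Set.projIcc (0:ℝ) 1 zero_le_one 0 = (0 : unitInterval) := by
    apply Subtype.ext; simp [Set.coe_projIcc]
  have proj1 : Set.projIcc (0:ℝ) 1 zero_le_one 1 = (1 : unitInterval) := by
    apply Subtype.ext; simp [Set.coe_projIcc]
  have hVc : Continuous V :=
    (phi_continuous β).comp (H.continuous.comp
      ((continuous_projIcc.comp continuous_snd).prodMk ((ell_continuous β).comp continuous_fst)))
  have hVunit : ∀ p, ‖V p‖ = 1 := fun p => phi_abs β _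
  have hVbot : ∀ t, V (t, 0) = 1 := by
    intro t
    show phi β (H (_, _)) = 1
    rw [proj0, H.apply_zero, ContinuousMap.comp_apply]
    exact hf1 (ell β t)
  have hVloop : ∀ s, V (0, s) = V (1, s) := by
    intro s
    show phi β _ = phi β _
    rw [ell_loop β]
  have hVtop : ∀ t, V (t, 1) = wrap (σfun t) := by
    intro t
    show phi β (H (_, _)) = _
    rw [proj1, H.apply_one, ContinuousMap.id_apply]
    exact phi_ell β hβ0 t
  exact no_winding V hVc hVunit hVbot hVloop σfun
    (continuous_const.max (continuous_const.min (by fun_prop)))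
    (by norm_num [hσfun]) (by norm_num [hσfun]) hVtop
end

section
/- The line with two origins R is not homotopy equivalent to any Hausdorff topological space: for every topological space H satisfying the T2 separation axiom, there is no homotopy equivalence between R and H. -/
/-- The setoid on `ℝ × Bool` defining the line with two origins:
`(x, i) ∼ (y, j)` iff `x = y` and (`i = j` or `x ≠ 0`). -/
def lineTwoOriginsSetoid : Setoid (ℝ × Bool) where
  r p q := p.1 = q.1 ∧ (p.2 = q.2 ∨ p.1 ≠ 0)
  iseqv := by
    constructor
    · intro p; exact ⟨rfl, Or.inl rfl⟩
    · rintro p q ⟨h1, h2 | h2⟩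
      · exact ⟨h1.symm, Or.inl h2.symm⟩
      · exact ⟨h1.symm, Or.inr (h1 ▸ h2)⟩
    · rintro p q r ⟨h1, h2⟩ ⟨k1, k2⟩
      refine ⟨h1.trans k1, ?_⟩
      rcases h2 with h2 | h2
      · rcases k2 with k2 | k2
        · exact Or.inl (h2.trans k2)
        · exact Or.inr (h1.symm ▸ k2)
      · exact Or.inr h2

/-- The line with two origins, with the quotient topology. -/
def LineTwoOrigins : Type := Quotient lineTwoOriginsSetoid

instance : TopologicalSpace LineTwoOrigins :=
  inferInstanceAs (TopologicalSpace (Quotient lineTwoOriginsSetoid))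

open Filter Topology

namespace LTO

def q (p : ℝ × Bool) : LineTwoOrigins := Quotient.mk lineTwoOriginsSetoid p

lemma continuous_q : Continuous q := continuous_quot_mk

lemma isOpen_iff {s : Set LineTwoOrigins} : IsOpen s ↔ IsOpen (q ⁻¹' s) :=
  isQuotientMap_quot_mk.isOpen_preimage.symm

def pa : LineTwoOrigins := q (0, true)
def pb : LineTwoOrigins := q (0, false)

lemma q_eq_iff {p p' : ℝ × Bool} : q p = q p' ↔ (p.1 = p'.1 ∧ (p.2 = p'.2 ∨ p.1 ≠ 0)) :=
  ⟨fun h => Quotient.exact h, fun h => Quotient.sound h⟩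

lemma pa_ne_pb : pa ≠ pb := by
  intro h
  rcases q_eq_iff.1 h with ⟨-, h2 | h2⟩ <;> simp at h2

lemma q_eq_of_ne {x : ℝ} (hx : x ≠ 0) (i j : Bool) : q (x, i) = q (x, j) :=
  Quotient.sound ⟨rfl, Or.inr hx⟩

def pi : LineTwoOrigins → ℝ := Quotient.lift Prod.fst (fun _ _ h => h.1)

lemma continuous_pi : Continuous pi := Continuous.quotient_lift continuous_fst _

lemma pi_q (p : ℝ × Bool) : pi (q p) = p.1 := rfl

lemma eq_pa_or_pb_of_pi_eq_zero {y : LineTwoOrigins} (h : pi y = 0) : y = pa ∨ y = pb := by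
  induction y using Quotient.ind with
  | _ p =>
    rcases p with ⟨x, i⟩
    have hx : x = 0 := h
    subst hx
    cases i
    · right; rfl
    · left; rfl

lemma q_eq_origin_iff {p : ℝ × Bool} {i : Bool} : q p = q (0, i) ↔ p = (0, i) := by
  constructor
  · intro h
    rcases q_eq_iff.1 h with ⟨h1, h2 | h2⟩
    · exact Prod.ext h1 h2
    · exact absurd h1 h2
  · rintro rfl; rfl

lemma isOpen_ne_origin (i : Bool) : IsOpen {y : LineTwoOrigins | y ≠ q (0, i)} := by
  rw [isOpen_iff]
  have : q ⁻¹' {y : LineTwoOrigins | y ≠ q (0, i)} = {(0, i)}ᶜ := by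
    ext p
    simp [Set.mem_preimage, q_eq_origin_iff]
  rw [this]
  exact isOpen_compl_singleton

/-- The map `x ↦ q (x, i)` tends to the origin of sheet `j` (for any `j`!) as `x → 0`, `x ≠ 0`. -/
lemma tendsto_q_origin (i j : Bool) :
    Tendsto (fun x : ℝ => q (x, i)) (𝓝[≠] (0:ℝ)) (𝓝 (q (0, j))) := by
  rw [tendsto_nhds]
  intro s hs hmem
  have hpre : IsOpen (q ⁻¹' s) := hs.preimage continuous_q
  have h0 : ((0:ℝ), j) ∈ q ⁻¹' s := hmem
  have hsl : IsOpen {x : ℝ | (x, j) ∈ q ⁻¹' s} :=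
    hpre.preimage (continuous_id.prodMk continuous_const)
  rcases Metric.isOpen_iff.1 hsl 0 h0 with ⟨ε, hε, hball⟩
  have : ∀ᶠ x in 𝓝[≠] (0:ℝ), x ∈ Metric.ball (0:ℝ) ε ∧ x ≠ 0 := by
    filter_upwards [nhdsWithin_le_nhds (Metric.ball_mem_nhds 0 hε),
      self_mem_nhdsWithin] with x hx hx' using ⟨hx, hx'⟩
  filter_upwards [this] with x ⟨hx, hx0⟩
  have : q (x, i) = q (x, j) := q_eq_of_ne hx0 i j
  show q (x, i) ∈ s
  rw [this]
  exact hball hx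



section Core

variable (L : C(unitInterval × LineTwoOrigins, LineTwoOrigins))

noncomputable def proj : ℝ → unitInterval := Set.projIcc 0 1 zero_le_one

lemma continuous_proj : Continuous proj := continuous_projIcc

lemma proj_zero : proj 0 = 0 := by
  rw [proj, Set.projIcc_left]; rfl

lemma proj_one : proj 1 = 1 := by
  rw [proj, Set.projIcc_right]; rfl

noncomputable def F (i : Bool) (p : ℝ × ℝ) : LineTwoOrigins := L (proj p.1, q (p.2, i))

lemma continuous_F (i : Bool) : Continuous (F L i) :=
  L.continuous.comp ((continuous_proj.comp continuous_fst).prodMk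
    (continuous_q.comp (continuous_snd.prodMk continuous_const)))

noncomputable def cc (p : ℝ × ℝ) : ℝ := pi (F L true p)

lemma continuous_cc : Continuous (cc L) := continuous_pi.comp (continuous_F L true)

noncomputable def uu (t : ℝ) : LineTwoOrigins := F L true (t, 0)
noncomputable def vv (t : ℝ) : LineTwoOrigins := F L false (t, 0)

lemma continuous_uu : Continuous (uu L) :=
  (continuous_F L true).comp (continuous_id.prodMk continuous_const)
lemma continuous_vv : Continuous (vv L) :=
  (continuous_F L false).comp (continuous_id.prodMk continuous_const)

lemma F_outside {t x : ℝ} (hx : x ≠ 0) : F L true (t, x) = F L false (t, x) := by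
  unfold F
  rw [q_eq_of_ne hx true false]

lemma cc_pi_uu (t : ℝ) : cc L (t, 0) = pi (uu L t) := rfl

lemma cc_pi_vv (t : ℝ) : cc L (t, 0) = pi (vv L t) := by
  have h1 : Tendsto (fun x : ℝ => cc L (t, x)) (𝓝[≠] (0:ℝ)) (𝓝 (cc L (t, 0))) :=
    ((continuous_cc L).comp (continuous_const.prodMk continuous_id)).tendsto 0
      |>.mono_left nhdsWithin_le_nhds
  have h2 : Tendsto (fun x : ℝ => pi (F L false (t, x))) (𝓝[≠] (0:ℝ)) (𝓝 (pi (vv L t))) :=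
    ((continuous_pi.comp ((continuous_F L false).comp
      (continuous_const.prodMk continuous_id))).tendsto 0).mono_left nhdsWithin_le_nhds
  have h3 : Tendsto (fun x : ℝ => cc L (t, x)) (𝓝[≠] (0:ℝ)) (𝓝 (pi (vv L t))) := by
    refine h2.congr' ?_
    filter_upwards [self_mem_nhdsWithin] with x hx
    exact (congrArg pi (F_outside L hx)).symm
  exact tendsto_nhds_unique h1 h3

def DD : Set ℝ := {t | (uu L t = pa ∧ vv L t = pb) ∨ (uu L t = pb ∧ vv L t = pa)}

lemma origin_ne (i : Bool) : q (0, i) ≠ q (0, !i) := by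
  intro h
  have := q_eq_origin_iff.1 h
  cases i <;> simp_all

lemma pa_def : pa = q (0, true) := rfl
lemma pb_def : pb = q (0, false) := rfl

lemma pi_ne_zero_of_ne_origins {A : LineTwoOrigins} (h1 : A ≠ q (0, true))
    (h2 : A ≠ q (0, false)) : pi A ≠ 0 := by
  intro h0
  rcases eq_pa_or_pb_of_pi_eq_zero h0 with h | h
  · exact h1 (h.trans pa_def)
  · exact h2 (h.trans pb_def)

lemma isClosed_DD : IsClosed (DD L) := by
  have hc : ∀ i : Bool, IsClosed {y : LineTwoOrigins | y = q (0, i)} := by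
    intro i
    rw [← isOpen_compl_iff]
    exact isOpen_ne_origin i
  have h1 : ∀ (w : ℝ → LineTwoOrigins) (_ : Continuous w) (i : Bool),
      IsClosed {t : ℝ | w t = q (0, i)} := fun w hw i => (hc i).preimage hw
  exact (((h1 _ (continuous_uu L) true).inter (h1 _ (continuous_vv L) false)).union
    ((h1 _ (continuous_uu L) false).inter (h1 _ (continuous_vv L) true)))

lemma boxAux (t₀ : ℝ) (i : Bool) (hu : uu L t₀ = q (0, i)) (hv : vv L t₀ = q (0, !i)) :
    ∃ r > 0, (∀ t x : ℝ, |t - t₀| < r → x ≠ 0 → |x| < r → cc L (t, x) ≠ 0) ∧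
      (∀ t : ℝ, |t - t₀| < r → cc L (t, 0) = 0 → t ∈ DD L) := by
  have hO1 : IsOpen {y : LineTwoOrigins | y ≠ q (0, !i)} := isOpen_ne_origin (!i)
  have hO2 : IsOpen {y : LineTwoOrigins | y ≠ q (0, i)} := isOpen_ne_origin i
  have hpre1 : IsOpen (F L true ⁻¹' {y | y ≠ q (0, !i)}) := hO1.preimage (continuous_F L true)
  have hpre2 : IsOpen (F L false ⁻¹' {y | y ≠ q (0, i)}) := hO2.preimage (continuous_F L false)
  have hm1 : (t₀, (0:ℝ)) ∈ F L true ⁻¹' {y | y ≠ q (0, !i)} := by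
    show F L true (t₀, 0) ≠ q (0, !i)
    rw [show F L true (t₀, 0) = uu L t₀ from rfl, hu]
    exact origin_ne i
  have hm2 : (t₀, (0:ℝ)) ∈ F L false ⁻¹' {y | y ≠ q (0, i)} := by
    show F L false (t₀, 0) ≠ q (0, i)
    rw [show F L false (t₀, 0) = vv L t₀ from rfl, hv]
    intro h
    exact origin_ne i (h.symm)
  rcases Metric.isOpen_iff.1 hpre1 _ hm1 with ⟨r₁, hr₁, hball₁⟩
  rcases Metric.isOpen_iff.1 hpre2 _ hm2 with ⟨r₂, hr₂, hball₂⟩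
  refine ⟨min r₁ r₂, lt_min hr₁ hr₂, ?_, ?_⟩
  · intro t x ht hx hxr
    have hmem1 : (t, x) ∈ Metric.ball (t₀, (0:ℝ)) r₁ := by
      rw [Metric.mem_ball, Prod.dist_eq]
      exact max_lt (by rw [Real.dist_eq]; exact ht.trans_le (min_le_left _ _))
        (by rw [Real.dist_eq, sub_zero]; exact hxr.trans_le (min_le_left _ _))
    have hmem2 : (t, x) ∈ Metric.ball (t₀, (0:ℝ)) r₂ := by
      rw [Metric.mem_ball, Prod.dist_eq]
      exact max_lt (by rw [Real.dist_eq]; exact ht.trans_le (min_le_right _ _))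
        (by rw [Real.dist_eq, sub_zero]; exact hxr.trans_le (min_le_right _ _))
    have hA1 : F L true (t, x) ≠ q (0, !i) := hball₁ hmem1
    have hA2 : F L false (t, x) ≠ q (0, i) := hball₂ hmem2
    rw [← F_outside L hx] at hA2
    show pi (F L true (t, x)) ≠ 0
    cases i
    · exact pi_ne_zero_of_ne_origins hA1 hA2
    · exact pi_ne_zero_of_ne_origins hA2 hA1
  · intro t ht hc0
    have hmem1 : (t, (0:ℝ)) ∈ Metric.ball (t₀, (0:ℝ)) r₁ := by
      rw [Metric.mem_ball, Prod.dist_eq]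
      exact max_lt (by rw [Real.dist_eq]; exact ht.trans_le (min_le_left _ _))
        (by simpa using hr₁)
    have hmem2 : (t, (0:ℝ)) ∈ Metric.ball (t₀, (0:ℝ)) r₂ := by
      rw [Metric.mem_ball, Prod.dist_eq]
      exact max_lt (by rw [Real.dist_eq]; exact ht.trans_le (min_le_right _ _))
        (by simpa using hr₂)
    have hA1 : uu L t ≠ q (0, !i) := hball₁ hmem1
    have hA2 : vv L t ≠ q (0, i) := hball₂ hmem2
    have hu' : uu L t = q (0, i) := by
      have h0 : pi (uu L t) = 0 := by rw [← cc_pi_uu]; exact hc0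
      rcases eq_pa_or_pb_of_pi_eq_zero h0 with h | h <;> rw [h] <;>
        [skip; skip] <;> cases i <;> simp_all [pa_def, pb_def]
    have hv' : vv L t = q (0, !i) := by
      have h0 : pi (vv L t) = 0 := by rw [← cc_pi_vv]; exact hc0
      rcases eq_pa_or_pb_of_pi_eq_zero h0 with h | h <;> rw [h] <;> cases i <;>
        simp_all [pa_def, pb_def]
    cases i
    · right; exact ⟨by simpa [pa_def, pb_def] using hu', by simpa [pa_def, pb_def] using hv'⟩
    · left; exact ⟨by simpa [pa_def, pb_def] using hu', by simpa [pa_def, pb_def] using hv'⟩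

lemma box {t₀ : ℝ} (ht : t₀ ∈ DD L) :
    ∃ r > 0, (∀ t x : ℝ, |t - t₀| < r → x ≠ 0 → |x| < r → cc L (t, x) ≠ 0) ∧
      (∀ t : ℝ, |t - t₀| < r → cc L (t, 0) = 0 → t ∈ DD L) := by
  rcases ht with ⟨hu, hv⟩ | ⟨hu, hv⟩
  · exact boxAux L t₀ true hu hv
  · exact boxAux L t₀ false hu hv

end Core

theorem core (L : C(unitInterval × LineTwoOrigins, LineTwoOrigins))
    (h0 : ∀ y, L (0, y) = y) (h1 : L (1, pa) = L (1, pb)) : False := by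
  classical
  have huu0 : uu L 0 = pa := by
    show L (proj 0, q (0, true)) = pa
    rw [proj_zero]; exact h0 _
  have hvv0 : vv L 0 = pb := by
    show L (proj 0, q (0, false)) = pb
    rw [proj_zero]; exact h0 _
  have h0D : (0:ℝ) ∈ DD L := Or.inl ⟨huu0, hvv0⟩
  have huv1 : uu L 1 = vv L 1 := by
    show L (proj 1, q (0, true)) = L (proj 1, q (0, false))
    rw [proj_one]; exact h1
  have h1notD : (1:ℝ) ∉ DD L := by
    rintro (⟨hu, hv⟩ | ⟨hu, hv⟩)
    · exact pa_ne_pb (hu.symm.trans (huv1.trans hv))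
    · exact pa_ne_pb (hv.symm.trans (huv1.symm.trans hu))
  have cc_zero : ∀ x : ℝ, cc L (0, x) = x := by
    intro x
    show pi (L (proj 0, q (x, true))) = x
    rw [proj_zero, h0]
    exact pi_q _
  -- the supremum
  set T : Set ℝ := {t : ℝ | 0 ≤ t ∧ Set.Icc 0 t ⊆ DD L} with hTdef
  have hT0 : (0:ℝ) ∈ T := by
    refine ⟨le_refl 0, ?_⟩
    intro s hs
    have : s = 0 := le_antisymm hs.2 hs.1
    rw [this]; exact h0D
  have hTbdd : BddAbove T := by
    refine ⟨1, fun t ht => ?_⟩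
    by_contra hcon
    push_neg at hcon
    exact h1notD (ht.2 ⟨zero_le_one, le_of_lt hcon⟩)
  set τ : ℝ := sSup T with hτdef
  have hτ0 : 0 ≤ τ := le_csSup hTbdd hT0
  have hsubD : Set.Icc 0 τ ⊆ DD L := by
    rintro t ⟨ht0, htτ⟩
    rcases htτ.lt_or_eq with hlt | heq
    · rcases exists_lt_of_lt_csSup ⟨0, hT0⟩ hlt with ⟨t', ht', hlt'⟩
      exact ht'.2 ⟨ht0, le_of_lt hlt'⟩
    · rw [heq]
      have hcl : τ ∈ closure T := csSup_mem_closure ⟨0, hT0⟩ hTbdd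
      have hTD : T ⊆ DD L := fun s hs => hs.2 ⟨hs.1, le_refl s⟩
      exact (isClosed_DD L).closure_subset ((closure_mono hTD) hcl)
  -- boxes via choice
  choose! r hrpos hP1 hP2 using fun (t : ℝ) (ht : t ∈ DD L) => box L ht
  -- cover of [0, τ]
  obtain ⟨S, hSsub, hScov⟩ := isCompact_Icc.elim_nhds_subcover
    (fun t => Metric.ball t (r t))
    (fun t ht => Metric.ball_mem_nhds t (hrpos t (hsubD ht)))
  have hSD : ∀ i ∈ S, i ∈ DD L := fun i hi => hsubD (hSsub i hi)
  have hSne : S.Nonempty := by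
    have : (0:ℝ) ∈ ⋃ i ∈ S, Metric.ball i (r i) := hScov ⟨le_refl 0, hτ0⟩
    rcases Set.mem_iUnion₂.1 this with ⟨i, hi, -⟩
    exact ⟨i, hi⟩
  set η : ℝ := (S.inf' hSne r) / 2 with hηdef
  have hinfpos : 0 < S.inf' hSne r := by
    obtain ⟨i, hi, heq⟩ := S.exists_mem_eq_inf' hSne r
    rw [heq]; exact hrpos i (hSD i hi)
  have hη : 0 < η := by positivity
  have hηlt : ∀ i ∈ S, η < r i := by
    intro i hi
    calc η < S.inf' hSne r := by rw [hηdef]; exact half_lt_self hinfpos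
    _ ≤ r i := Finset.inf'_le r hi
  -- ball containing τ
  have hτmem : τ ∈ ⋃ i ∈ S, Metric.ball i (r i) := hScov ⟨hτ0, le_refl τ⟩
  rcases Set.mem_iUnion₂.1 hτmem with ⟨i₀, hi₀S, hi₀ball⟩
  have hdτ : |τ - i₀| < r i₀ := by
    rw [← Real.dist_eq]; exact hi₀ball
  set γ : ℝ := (r i₀ - |τ - i₀|) / 2 with hγdef
  have hγpos : 0 < γ := by
    rw [hγdef]; linarith
  have hcov' : ∀ t : ℝ, 0 ≤ t → t ≤ τ + γ → ∃ i ∈ S, |t - i| < r i := by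
    intro t ht0 htle
    by_cases hcase : t ≤ τ
    · have : t ∈ ⋃ i ∈ S, Metric.ball i (r i) := hScov ⟨ht0, hcase⟩
      rcases Set.mem_iUnion₂.1 this with ⟨i, hi, hball⟩
      exact ⟨i, hi, by rw [← Real.dist_eq]; exact hball⟩
    · push_neg at hcase
      refine ⟨i₀, hi₀S, ?_⟩
      have habs : |t - i₀| ≤ |t - τ| + |τ - i₀| := abs_sub_le t τ i₀
      have h2 : |t - τ| = t - τ := abs_of_pos (by linarith)
      rw [hγdef] at htle
      rw [h2] at habs
      linarith
  -- a point t₁ beyond τ not in DD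
  have hτγT : τ + γ ∉ T := by
    intro h
    have := le_csSup hTbdd h
    linarith
  have hnsub : ¬ (Set.Icc 0 (τ + γ) ⊆ DD L) := fun h => hτγT ⟨by linarith, h⟩
  obtain ⟨t₁, ht₁mem, ht₁notD⟩ := Set.not_subset.1 hnsub
  have ht₁0 : (0:ℝ) ≤ t₁ := ht₁mem.1
  have ht₁le : t₁ ≤ τ + γ := ht₁mem.2
  -- nonvanishing of cc on the region
  have key1 : ∀ t x : ℝ, 0 ≤ t → t ≤ t₁ → x ≠ 0 → |x| ≤ η → cc L (t, x) ≠ 0 := by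
    intro t x ht0 htle hx hxη
    obtain ⟨i, hiS, hti⟩ := hcov' t ht0 (htle.trans ht₁le)
    exact hP1 i (hSD i hiS) t x hti hx (lt_of_le_of_lt hxη (hηlt i hiS))
  have key2 : cc L (t₁, 0) ≠ 0 := by
    intro hval
    obtain ⟨i, hiS, hti⟩ := hcov' t₁ ht₁0 ht₁le
    exact ht₁notD (hP2 i (hSD i hiS) t₁ hti hval)
  -- the connected set
  set P1 : Set (ℝ × ℝ) := Set.Icc 0 t₁ ×ˢ Set.Ioc 0 η with hP1def
  set P2 : Set (ℝ × ℝ) := Set.Icc 0 t₁ ×ˢ Set.Ico (-η) 0 with hP2def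
  set pt : ℝ × ℝ := (t₁, 0) with hptdef
  have hP1conn : IsPreconnected P1 := ((convex_Icc _ _).prod (convex_Ioc _ _)).isPreconnected
  have hP2conn : IsPreconnected P2 := ((convex_Icc _ _).prod (convex_Ico _ _)).isPreconnected
  have hptc1 : pt ∈ closure P1 := by
    rw [hP1def, closure_prod_eq]
    refine ⟨?_, ?_⟩
    · rw [(isClosed_Icc).closure_eq]
      exact ⟨ht₁0, le_refl t₁⟩
    · rw [closure_Ioc (ne_of_lt hη)]
      exact ⟨le_refl 0, le_of_lt hη⟩
  have hptc2 : pt ∈ closure P2 := by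
    rw [hP2def, closure_prod_eq]
    refine ⟨?_, ?_⟩
    · rw [(isClosed_Icc).closure_eq]
      exact ⟨ht₁0, le_refl t₁⟩
    · rw [closure_Ico (ne_of_lt (neg_lt_zero.2 hη))]
      exact ⟨le_of_lt (neg_lt_zero.2 hη), le_refl 0⟩
  have hU1 : IsPreconnected (P1 ∪ {pt}) :=
    hP1conn.subset_closure Set.subset_union_left
      (Set.union_subset subset_closure (Set.singleton_subset_iff.2 hptc1))
  have hU2 : IsPreconnected (P2 ∪ {pt}) :=
    hP2conn.subset_closure Set.subset_union_left
      (Set.union_subset subset_closure (Set.singleton_subset_iff.2 hptc2))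
  have hW : IsPreconnected ((P1 ∪ {pt}) ∪ (P2 ∪ {pt})) :=
    IsPreconnected.union pt (Set.mem_union_right _ rfl) (Set.mem_union_right _ rfl) hU1 hU2
  have himg : IsPreconnected (cc L '' ((P1 ∪ {pt}) ∪ (P2 ∪ {pt}))) :=
    hW.image _ (continuous_cc L).continuousOn
  have hmemp : η ∈ cc L '' ((P1 ∪ {pt}) ∪ (P2 ∪ {pt})) := by
    refine ⟨(0, η), ?_, cc_zero η⟩
    exact Set.mem_union_left _ (Set.mem_union_left _ ⟨⟨le_refl 0, ht₁0⟩, ⟨hη, le_refl η⟩⟩)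
  have hmemn : -η ∈ cc L '' ((P1 ∪ {pt}) ∪ (P2 ∪ {pt})) := by
    refine ⟨(0, -η), ?_, cc_zero (-η)⟩
    exact Set.mem_union_right _ (Set.mem_union_left _
      ⟨⟨le_refl 0, ht₁0⟩, ⟨le_refl (-η), neg_lt_zero.2 hη⟩⟩)
  have hzero : (0:ℝ) ∈ cc L '' ((P1 ∪ {pt}) ∪ (P2 ∪ {pt})) :=
    himg.Icc_subset hmemn hmemp ⟨neg_nonpos.2 (le_of_lt hη), le_of_lt hη⟩
  obtain ⟨⟨t, x⟩, hmemW, hval⟩ := hzero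
  rcases hmemW with (hmem | hpt) | (hmem | hpt)
  · rcases hmem with ⟨⟨ht0, htle⟩, ⟨hx0, hxη⟩⟩
    exact key1 t x ht0 htle (ne_of_gt hx0) (by rw [abs_of_pos hx0]; exact hxη) hval
  · rw [Set.mem_singleton_iff] at hpt
    rw [hpt] at hval
    exact key2 hval
  · rcases hmem with ⟨⟨ht0, htle⟩, ⟨hxη, hx0⟩⟩
    refine key1 t x ht0 htle (ne_of_lt hx0) ?_ hval
    rw [abs_of_neg hx0]
    linarith
  · rw [Set.mem_singleton_iff] at hpt
    rw [hpt] at hval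
    exact key2 hval

end LTO

/-- The line with two origins is not homotopy equivalent to any Hausdorff space. -/
theorem lineTwoOrigins_not_homotopyEquiv_t2 (H : Type u) [TopologicalSpace H]
    [T2Space H] :
    IsEmpty (ContinuousMap.HomotopyEquiv LineTwoOrigins H) := by
  constructor
  intro e
  have hfab : e.toFun LTO.pa = e.toFun LTO.pb := by
    have h1 : Tendsto (fun x : ℝ => e.toFun (LTO.q (x, true))) (𝓝[≠] (0:ℝ))
        (𝓝 (e.toFun LTO.pa)) :=
      (e.toFun.continuous.tendsto LTO.pa).comp (LTO.tendsto_q_origin true true)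
    have h2 : Tendsto (fun x : ℝ => e.toFun (LTO.q (x, true))) (𝓝[≠] (0:ℝ))
        (𝓝 (e.toFun LTO.pb)) :=
      (e.toFun.continuous.tendsto LTO.pb).comp (LTO.tendsto_q_origin true false)
    exact tendsto_nhds_unique h1 h2
  obtain ⟨K⟩ := e.left_inv
  refine LTO.core K.symm.toContinuousMap (fun y => ?_) ?_
  · exact K.symm.apply_zero y
  · show K.symm (1, LTO.pa) = K.symm (1, LTO.pb)
    rw [K.symm.apply_one, K.symm.apply_one]
    show e.invFun (e.toFun LTO.pa) = e.invFun (e.toFun LTO.pb)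
    rw [hfab]
end

section
/- The original (collared) Prüfer surface M is not separable; indeed the images in M of the open sets {a} × (ℝ × (-∞,0)) ⊆ S, for a ∈ ℝ, form an uncountable family of pairwise disjoint nonempty open subsets of M, so M has no countable dense subset. -/
/-- The setoid on `Σ a : ℝ, ℝ × ℝ` defining the original (collared) Prüfer surface:
`⟨a,(x,y)⟩ ∼ ⟨b,(x',y')⟩` iff the points are equal, or
`y = y'`, `y > 0` and `a + x*y = b + x'*y'`. -/
def pruferCollaredSetoid : Setoid (Σ _ : ℝ, ℝ × ℝ) where
  r p q := p = q ∨
    (p.2.2 = q.2.2 ∧ 0 < p.2.2 ∧ p.1 + p.2.1 * p.2.2 = q.1 + q.2.1 * q.2.2)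
  iseqv := by
    constructor
    · intro p; exact Or.inl rfl
    · rintro p q (rfl | ⟨h1, h2, h3⟩)
      · exact Or.inl rfl
      · exact Or.inr ⟨h1.symm, h1 ▸ h2, h3.symm⟩
    · rintro p q r (rfl | ⟨h1, h2, h3⟩) h
      · exact h
      · rcases h with rfl | ⟨k1, k2, k3⟩
        · exact Or.inr ⟨h1, h2, h3⟩
        · exact Or.inr ⟨h1.trans k1, h2, h3.trans k3⟩

/-- The original (collared) Prüfer surface, with the quotient topology. -/
def PruferCollared : Type := Quotient pruferCollaredSetoid

instance : TopologicalSpace PruferCollared :=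
  inferInstanceAs (TopologicalSpace (Quotient pruferCollaredSetoid))

/-- The image in the collared Prüfer surface of the open set `{a} × (ℝ × (-∞,0))`. -/
def collaredStrip (a : ℝ) : Set PruferCollared :=
  Quotient.mk pruferCollaredSetoid '' {p : Σ _ : ℝ, ℝ × ℝ | p.1 = a ∧ p.2.2 < 0}

/-- A point with negative second coordinate is equivalent only to itself. -/
lemma prufer_eq_of_rel_neg {p q : Σ _ : ℝ, ℝ × ℝ}
    (h : pruferCollaredSetoid.r p q) (hq : q.2.2 < 0) : p = q := by
  rcases h with rfl | ⟨h1, h2, _⟩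
  · rfl
  · exact absurd (h1 ▸ h2) (not_lt.2 hq.le)

lemma collaredStrip_preimage (a : ℝ) :
    Quotient.mk pruferCollaredSetoid ⁻¹' (collaredStrip a)
      = {p : Σ _ : ℝ, ℝ × ℝ | p.1 = a ∧ p.2.2 < 0} := by
  ext p
  constructor
  · rintro ⟨q, hq, hpq⟩
    have : pruferCollaredSetoid.r p q := Quotient.exact hpq.symm
    rwa [prufer_eq_of_rel_neg this hq.2]
  · intro hp
    exact ⟨p, hp, rfl⟩

/-- The original (collared) Prüfer surface is not separable: the strips
`collaredStrip a`, `a : ℝ`, form an uncountable family of pairwise disjoint nonempty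
open subsets, and there is no countable dense subset. -/
theorem pruferCollared_not_separable :
    (∀ a : ℝ, IsOpen (collaredStrip a) ∧ (collaredStrip a).Nonempty) ∧
    (∀ a b : ℝ, a ≠ b → Disjoint (collaredStrip a) (collaredStrip b)) ∧
    ¬ TopologicalSpace.SeparableSpace PruferCollared := by
  have hopen : ∀ a : ℝ, IsOpen (collaredStrip a) := by
    intro a
    rw [show IsOpen (collaredStrip a) ↔ IsOpen (Quotient.mk pruferCollaredSetoid ⁻¹' collaredStrip a) from isOpen_coinduced, collaredStrip_preimage]
    rw [isOpen_sigma_iff]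
    intro i
    by_cases hia : i = a
    · subst hia
      have : (Sigma.mk i ⁻¹' {p : Σ _ : ℝ, ℝ × ℝ | p.1 = i ∧ p.2.2 < 0})
          = Set.univ ×ˢ Set.Iio (0:ℝ) := by
        ext ⟨x, y⟩; simp [Set.mem_prod]
      rw [this]
      exact isOpen_univ.prod isOpen_Iio
    · have : (Sigma.mk i ⁻¹' {p : Σ _ : ℝ, ℝ × ℝ | p.1 = a ∧ p.2.2 < 0}) = ∅ := by
        ext ⟨x, y⟩; simp [hia]
      rw [this]; exact isOpen_empty
  have hne : ∀ a : ℝ, (collaredStrip a).Nonempty := by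
    intro a
    exact ⟨_, ⟨⟨a, (0, -1)⟩, ⟨rfl, by norm_num⟩, rfl⟩⟩
  have hdisj : ∀ a b : ℝ, a ≠ b → Disjoint (collaredStrip a) (collaredStrip b) := by
    intro a b hab
    rw [Set.disjoint_left]
    rintro z ⟨p, ⟨hpa, hpy⟩, rfl⟩ ⟨q, ⟨hqb, hqy⟩, hq⟩
    have : q = p := prufer_eq_of_rel_neg (Quotient.exact hq) hpy
    exact hab (hpa ▸ hqb ▸ this ▸ rfl)
  refine ⟨fun a => ⟨hopen a, hne a⟩, hdisj, ?_⟩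
  rintro ⟨s, hsc, hsd⟩
  have hmem : ∀ a : ℝ, ∃ z, z ∈ s ∩ collaredStrip a := fun a =>
    (Set.inter_comm _ _ ▸ hsd.inter_open_nonempty _ (hopen a) (hne a))
  choose f hf using hmem
  have hinj : Function.Injective f := by
    intro a b hab
    by_contra hne'
    exact Set.disjoint_left.1 (hdisj a b hne') (hf a).2 (hab ▸ (hf b).2)
  have : (Set.range f).Countable := hsc.mono (Set.range_subset_iff.2 fun a => (hf a).1)
  have : Countable ℝ := by
    have := this.to_subtype
    exact Countable.of_equiv _ (Equiv.ofInjective f hinj).symm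
  exact not_countable this
end

section
/- The line with two origins R does not have the homotopy type of a CW complex: there is no Hausdorff topological space Y carrying a CW-complex structure on all of Y together with a homotopy equivalence between R and Y. -/
namespace Topology

open Metric Set

/-- A CW-complex structure on a set `C` in a topological space `X` (Mathlib's
`Topology.CWComplex`): `C` is the union of closed cells, which are images of
`closedBall 0 1 ⊆ Fin n → ℝ` under characteristic maps that are homeomorphisms onto the
open cells; the open cells are pairwise disjoint; each cell frontier lies in finitely many
lower-dimensional closed cells; and `C` carries the weak topology determined by the
closed cells. -/
class LegacyCWComplex.{u} {X : Type u} [TopologicalSpace X] (C : Set X) where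
  /-- The indexing type of the cells of dimension `n`. -/
  cell (n : ℕ) : Type u
  /-- The characteristic map of the `n`-cell given by the index `i`. -/
  map (n : ℕ) (i : cell n) : PartialEquiv (Fin n → ℝ) X
  /-- The source of every characteristic map of dimension `n` is `ball 0 1`. -/
  source_eq (n : ℕ) (i : cell n) : (map n i).source = ball 0 1
  /-- The characteristic maps are continuous on `closedBall 0 1`. -/
  continuousOn (n : ℕ) (i : cell n) : ContinuousOn (map n i) (closedBall 0 1)
  /-- The inverse characteristic maps are continuous on the target. -/
  continuousOn_symm (n : ℕ) (i : cell n) : ContinuousOn (map n i).symm (map n i).target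
  /-- The open cells are pairwise disjoint. -/
  pairwiseDisjoint' :
    (univ : Set (Σ n, cell n)).PairwiseDisjoint fun ni ↦ map ni.1 ni.2 '' ball 0 1
  /-- The boundary of a cell is contained in a finite union of closed cells of
  lower dimension. -/
  mapsto (n : ℕ) (i : cell n) : ∃ I : Π m, Finset (cell m),
    MapsTo (map n i) (sphere 0 1) (⋃ (m < n) (j ∈ I m), map m j '' closedBall 0 1)
  /-- The weak topology: a set `A ⊆ C` is closed if its intersection with every closed
  cell is closed. -/
  closed' (A : Set X) (asubc : A ⊆ C) :
    (∀ n j, IsClosed (A ∩ map n j '' closedBall 0 1)) → IsClosed A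
  /-- The union of all closed cells is `C`. -/
  union' : ⋃ (n : ℕ) (j : cell n), map n j '' closedBall 0 1 = C

end Topology

namespace LTO

open Topology Set

local notation "L" => LineTwoOrigins

/-- chart map -/
def chart (i : Bool) (x : ℝ) : LineTwoOrigins := Quotient.mk lineTwoOriginsSetoid (x, i)

lemma continuous_chart (i : Bool) : Continuous (chart i) :=
  continuous_quotient_mk'.comp (Continuous.prodMk_left i)

/-- projection -/
def pr : LineTwoOrigins → ℝ :=
  Quotient.lift Prod.fst (fun _ _ h => h.1)

lemma continuous_pr : Continuous pr := continuous_quot_lift _ continuous_fst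

@[simp] lemma pr_chart (i : Bool) (x : ℝ) : pr (chart i x) = x := rfl

lemma chart_eq_chart {i j : Bool} {x : ℝ} (hx : x ≠ 0) : chart i x = chart j x :=
  Quotient.sound ⟨rfl, Or.inr hx⟩

lemma rep (l : LineTwoOrigins) : ∃ (x : ℝ) (i : Bool), l = chart i x := by
  obtain ⟨⟨x, i⟩, rfl⟩ := Quotient.exists_rep l
  exact ⟨x, i, rfl⟩

lemma chart_injective (i : Bool) : Function.Injective (chart i) := by
  intro x y h
  have := congrArg pr h
  simpa using this

lemma origin_ne_s19 : chart false 0 ≠ chart true 0 := by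
  intro h
  rcases Quotient.exact h with ⟨-, h2 | h2⟩ <;> simp at h2

lemma isOpen_L_iff (s : Set LineTwoOrigins) :
    IsOpen s ↔ IsOpen ((Quotient.mk lineTwoOriginsSetoid) ⁻¹' s) :=
  isOpen_coinduced.symm.symm

/-- the chart image -/
def U (i : Bool) : Set LineTwoOrigins := Set.range (chart i)

lemma mem_U_chart {i j : Bool} {x : ℝ} (hx : x ≠ 0): chart j x ∈ U i :=
  ⟨x, (chart_eq_chart hx).symm⟩

lemma mem_U_self (i : Bool) (x : ℝ) : chart i x ∈ U i := ⟨x, rfl⟩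

lemma preimage_U (i : Bool) :
    (Quotient.mk lineTwoOriginsSetoid) ⁻¹' (U i) =
      {p : ℝ × Bool | p.2 = i ∨ p.1 ≠ 0} := by
  ext ⟨x, j⟩
  simp only [Set.mem_preimage, Set.mem_setOf_eq]
  constructor
  · rintro ⟨y, hy⟩
    rcases Quotient.exact hy with ⟨h1, h2 | h2⟩
    · exact Or.inl h2.symm
    · subst h1; exact Or.inr h2
  · rintro (rfl | h)
    · exact ⟨x, rfl⟩
    · exact ⟨x, (chart_eq_chart h).symm⟩

lemma isOpen_U (i : Bool) : IsOpen (U i) := by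
  rw [isOpen_L_iff, preimage_U]
  have : {p : ℝ × Bool | p.2 = i ∨ p.1 ≠ 0} =
      (Set.univ ×ˢ {i}) ∪ ({x : ℝ | x ≠ 0} ×ˢ Set.univ) := by
    ext ⟨x, j⟩
    simp only [Set.mem_setOf_eq, Set.mem_union, Set.mem_prod, Set.mem_univ, Set.mem_singleton_iff,
      true_and, and_true]
    try tauto
  rw [this]
  exact ((isOpen_univ.prod (isOpen_discrete _)).union
    ((isOpen_ne).prod isOpen_univ))

lemma mem_U_of_not_mem (l : LineTwoOrigins) (h : l ∉ U false) : l ∈ U true := by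
  obtain ⟨x, i, rfl⟩ := rep l
  rcases eq_or_ne x 0 with rfl | hx
  · cases i
    · exact absurd (mem_U_self _ _) h
    · exact mem_U_self _ _
  · exact mem_U_chart hx

/-- non-separated origins -/
lemma origins_not_separated {V W : Set LineTwoOrigins} (hV : IsOpen V) (hW : IsOpen W)
    (h0 : chart false 0 ∈ V) (h1 : chart true 0 ∈ W) : (V ∩ W).Nonempty := by
  have hVo : IsOpen {x : ℝ | chart false x ∈ V} := hV.preimage (continuous_chart false)
  have hWo : IsOpen {x : ℝ | chart true x ∈ W} := hW.preimage (continuous_chart true)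
  have := (hVo.inter hWo)
  rcases Metric.isOpen_iff.1 this 0 ⟨h0, h1⟩ with ⟨ε, hε, hball⟩
  have hmem : (ε/2) ∈ {x : ℝ | chart false x ∈ V} ∩ {x : ℝ | chart true x ∈ W} := by
    apply hball
    have : (0:ℝ) < ε/2 := half_pos hε
    simp only [Metric.mem_ball, Real.dist_eq, sub_zero, abs_of_pos this]
    linarith
  exact ⟨chart false (ε/2), hmem.1, by
    rw [chart_eq_chart (by positivity : (ε/2) ≠ 0)]; exact hmem.2⟩

end LTO
namespace LTO

/-! ### The infinite cyclic cover -/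

/-- Setoid on ℝ × ℤ for the cover: sheets n glued in a chain. -/
def coverSetoid : Setoid (ℝ × ℤ) where
  r p q := p.1 = q.1 ∧ (p.2 = q.2 ∨ (0 < p.1 ∧ p.2 / 2 = q.2 / 2) ∨
    (p.1 < 0 ∧ (p.2 + 1) / 2 = (q.2 + 1) / 2))
  iseqv := by
    constructor
    · exact fun p => ⟨rfl, Or.inl rfl⟩
    · rintro ⟨x, n⟩ ⟨y, m⟩ ⟨rfl, h⟩
      refine ⟨rfl, ?_⟩
      rcases h with h | ⟨h1, h2⟩ | ⟨h1, h2⟩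
      · exact Or.inl h.symm
      · exact Or.inr (Or.inl ⟨h1, h2.symm⟩)
      · exact Or.inr (Or.inr ⟨h1, h2.symm⟩)
    · rintro ⟨x, n⟩ ⟨y, m⟩ ⟨z, l⟩ ⟨rfl, h⟩ ⟨rfl, h'⟩
      refine ⟨rfl, ?_⟩
      rcases h with rfl | ⟨h1, h2⟩ | ⟨h1, h2⟩ <;>
        rcases h' with rfl | ⟨h1', h2'⟩ | ⟨h1', h2'⟩ <;>
        first
          | (left; omega)
          | (right; left; exact ⟨by assumption, by omega⟩)
          | (right; right; exact ⟨by assumption, by omega⟩)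
          | (exfalso; linarith)

/-- The cover space. -/
def Cov : Type := Quotient coverSetoid

instance : TopologicalSpace Cov :=
  inferInstanceAs (TopologicalSpace (Quotient coverSetoid))

/-- chart maps of the cover -/
def echart (n : ℤ) (x : ℝ) : Cov := Quotient.mk coverSetoid (x, n)

lemma continuous_echart (n : ℤ) : Continuous (echart n) :=
  continuous_quotient_mk'.comp (Continuous.prodMk_left n)

lemma covrep (e : Cov) : ∃ (x : ℝ) (n : ℤ), e = echart n x := by
  obtain ⟨⟨x, n⟩, rfl⟩ := Quotient.exists_rep e
  exact ⟨x, n, rfl⟩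

/-- the label of an integer -/
def lb (n : ℤ) : Bool := n % 2 == 1

/-- The covering projection. -/
def qE : Cov → LineTwoOrigins :=
  Quotient.lift (fun p => chart (lb p.2) p.1) (by
    rintro ⟨x, n⟩ ⟨y, m⟩ ⟨rfl, h⟩
    rcases h with rfl | ⟨h1, h2⟩ | ⟨h1, h2⟩
    · rfl
    · exact chart_eq_chart (ne_of_gt h1)
    · exact chart_eq_chart (ne_of_lt h1))

lemma continuous_qE : Continuous qE :=
  continuous_quot_lift _ <| continuous_quotient_mk'.comp
    (continuous_fst.prodMk ((continuous_of_discreteTopology (f := lb)).comp continuous_snd))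

@[simp] lemma qE_echart (n : ℤ) (x : ℝ) : qE (echart n x) = chart (lb n) x := rfl

lemma isOpen_Cov_iff (s : Set Cov) :
    IsOpen s ↔ IsOpen ((Quotient.mk coverSetoid) ⁻¹' s) :=
  isOpen_coinduced.symm.symm

end LTO
namespace LTO

open Topology Set

lemma lb_true_iff {n : ℤ} : lb n = true ↔ n % 2 = 1 := by simp [lb]

lemma lb_false_iff {n : ℤ} : lb n = false ↔ n % 2 = 0 := by
  simp only [lb, beq_eq_false_iff_ne, ne_eq]
  omega

/-- base integer of sheet `k` over chart `i` -/
def nn (i : Bool) (k : ℤ) : ℤ := 2 * k + (if i then 1 else 0)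

lemma lb_nn (i : Bool) (k : ℤ) : lb (nn i k) = i := by
  cases i
  · rw [lb_false_iff]; simp [nn]
  · rw [lb_true_iff]; simp [nn]

/-- label (sheet index) of a point of the cover, with respect to chart `i` -/
noncomputable def labF (i : Bool) (p : ℝ × ℤ) : ℤ :=
  if lb p.2 = i then p.2 / 2
  else if p.1 < 0 then (if i then p.2 / 2 - 1 else (p.2 + 1) / 2)
  else p.2 / 2

lemma labF_sound (i : Bool) : ∀ (p q : ℝ × ℤ), coverSetoid.r p q → labF i p = labF i q := by
  rintro ⟨x, n⟩ ⟨y, m⟩ ⟨rfl, h⟩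
  rcases h with rfl | ⟨h1, h2⟩ | ⟨h1, h2⟩
  · rfl
  · have hx : ¬ (x < 0) := not_lt.2 h1.le
    have hn := lb_true_iff (n := n); have hn' := lb_false_iff (n := n)
    have hm := lb_true_iff (n := m); have hm' := lb_false_iff (n := m)
    simp only [labF, hx, if_false]
    cases i <;> rcases Bool.eq_false_or_eq_true (lb n) with h3 | h3 <;>
      rcases Bool.eq_false_or_eq_true (lb m) with h4 | h4 <;>
      simp_all <;> omega
  · have hn := lb_true_iff (n := n); have hn' := lb_false_iff (n := n)
    have hm := lb_true_iff (n := m); have hm' := lb_false_iff (n := m)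
    simp only [labF, h1, if_true]
    cases i <;> rcases Bool.eq_false_or_eq_true (lb n) with h3 | h3 <;>
      rcases Bool.eq_false_or_eq_true (lb m) with h4 | h4 <;>
      simp_all <;> omega

/-- label map on the cover -/
noncomputable def labE (i : Bool) : Cov → ℤ := Quotient.lift (labF i) (labF_sound i)

@[simp] lemma labE_echart_nn (i : Bool) (k : ℤ) (x : ℝ) :
    labE i (echart (nn i k) x) = k := by
  show labF i (x, nn i k) = k
  rw [labF, if_pos (lb_nn i k)]
  cases i <;> simp [nn] <;> try omega


/-- the sheets -/
def sheet (i : Bool) (k : ℤ) : Set Cov := Set.range (echart (nn i k))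

lemma labE_eq_of_mem_sheet {i : Bool} {k : ℤ} {e : Cov} (h : e ∈ sheet i k) :
    labE i e = k := by
  obtain ⟨x, rfl⟩ := h
  simp

lemma chart_mem_U_iff {i j : Bool} {x : ℝ} : chart j x ∈ U i ↔ (j = i ∨ x ≠ 0) := by
  constructor
  · rintro ⟨y, hy⟩
    rcases Quotient.exact hy with ⟨h1, h2 | h2⟩
    · exact Or.inl h2.symm
    · subst h1; exact Or.inr h2
  · rintro (rfl | h)
    · exact mem_U_self _ _
    · exact mem_U_chart h

lemma mem_sheet_of_mem_source {i : Bool} {e : Cov} (he : qE e ∈ U i) :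
    e ∈ sheet i (labE i e) := by
  obtain ⟨x, n, rfl⟩ := covrep e
  rw [qE_echart] at he
  show ∃ y, echart (nn i (labF i (x, n))) y = echart n x
  refine ⟨x, Quotient.sound ⟨rfl, ?_⟩⟩
  have hn := lb_true_iff (n := n); have hn' := lb_false_iff (n := n)
  by_cases hl : lb n = i
  · left; rw [labF, if_pos hl]
    subst hl
    rcases Bool.eq_false_or_eq_true (lb n) with h3 | h3 <;> simp_all [nn] <;> omega
  · have hx : x ≠ 0 := by
      rcases chart_mem_U_iff.1 he with h | h
      · exact absurd h hl
      · exact h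
    rw [labF, if_neg hl]
    rcases hx.lt_or_gt with hneg | hpos
    · right; right
      refine ⟨hneg, ?_⟩
      rw [if_pos hneg]
      cases i <;> rcases Bool.eq_false_or_eq_true (lb n) with h3 | h3 <;>
        simp_all [nn] <;> omega
    · right; left
      refine ⟨hpos, ?_⟩
      rw [if_neg (not_lt.2 hpos.le)]
      cases i <;> rcases Bool.eq_false_or_eq_true (lb n) with h3 | h3 <;>
        simp_all [nn] <;> omega

lemma isOpen_range_echart (N Np Nm : ℤ)
    (h : ∀ (x : ℝ) (n : ℤ), coverSetoid.r (x, n) (x, N) ↔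
      (n = N ∨ (0 < x ∧ n = Np) ∨ (x < 0 ∧ n = Nm))) :
    IsOpen (Set.range (echart N)) := by
  rw [isOpen_Cov_iff]
  have hpre : (Quotient.mk coverSetoid) ⁻¹' (Set.range (echart N)) =
      (Set.univ ×ˢ {N}) ∪ ((Set.Ioi (0:ℝ)) ×ˢ {Np}) ∪ ((Set.Iio (0:ℝ)) ×ˢ {Nm}) := by
    ext ⟨x, n⟩
    simp only [Set.mem_preimage, Set.mem_union, Set.mem_prod, Set.mem_univ, true_and,
      Set.mem_singleton_iff, Set.mem_Ioi, Set.mem_Iio]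
    rw [or_assoc, ← h x n]
    constructor
    · rintro ⟨y, hy⟩
      have h2 := Quotient.exact hy
      obtain ⟨h1, -⟩ := h2
      dsimp at h1
      subst h1
      exact coverSetoid.iseqv.symm (Quotient.exact hy)
    · intro hr
      exact ⟨x, Quotient.sound (coverSetoid.iseqv.symm hr)⟩
  erw [hpre]
  exact ((isOpen_univ.prod (isOpen_discrete _)).union
      (isOpen_Ioi.prod (isOpen_discrete _))).union (isOpen_Iio.prod (isOpen_discrete _))

lemma isOpen_sheet (i : Bool) (k : ℤ) : IsOpen (sheet i k) := by
  cases i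
  · refine isOpen_range_echart (nn false k) (2*k+1) (2*k-1) ?_
    intro x n
    have hN : nn false k = 2*k := by simp [nn]
    rw [hN]
    constructor
    · rintro ⟨-, h2 | ⟨hx, h2⟩ | ⟨hx, h2⟩⟩
      · exact Or.inl h2
      · have : n = 2*k ∨ n = 2*k+1 := by omega
        rcases this with rfl | rfl
        · exact Or.inl rfl
        · exact Or.inr (Or.inl ⟨hx, rfl⟩)
      · have : n = 2*k ∨ n = 2*k-1 := by omega
        rcases this with rfl | rfl
        · exact Or.inl rfl
        · exact Or.inr (Or.inr ⟨hx, rfl⟩)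
    · rintro (rfl | ⟨hx, rfl⟩ | ⟨hx, rfl⟩)
      · exact ⟨rfl, Or.inl rfl⟩
      · exact ⟨rfl, Or.inr (Or.inl ⟨hx, by omega⟩)⟩
      · exact ⟨rfl, Or.inr (Or.inr ⟨hx, by omega⟩)⟩
  · refine isOpen_range_echart (nn true k) (2*k) (2*k+2) ?_
    intro x n
    have hN : nn true k = 2*k+1 := by simp [nn]
    rw [hN]
    constructor
    · rintro ⟨-, h2 | ⟨hx, h2⟩ | ⟨hx, h2⟩⟩
      · exact Or.inl h2
      · have : n = 2*k+1 ∨ n = 2*k := by omega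
        rcases this with rfl | rfl
        · exact Or.inl rfl
        · exact Or.inr (Or.inl ⟨hx, rfl⟩)
      · have : n = 2*k+1 ∨ n = 2*k+2 := by omega
        rcases this with rfl | rfl
        · exact Or.inl rfl
        · exact Or.inr (Or.inr ⟨hx, rfl⟩)
    · rintro (rfl | ⟨hx, rfl⟩ | ⟨hx, rfl⟩)
      · exact ⟨rfl, Or.inl rfl⟩
      · exact ⟨rfl, Or.inr (Or.inl ⟨hx, by omega⟩)⟩
      · exact ⟨rfl, Or.inr (Or.inr ⟨hx, by omega⟩)⟩

end LTO
namespace LTO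

open Topology Set

lemma chart_pr_eq {i : Bool} {l : LineTwoOrigins} (hl : l ∈ U i) : chart i (pr l) = l := by
  obtain ⟨x, rfl⟩ := hl
  rfl

lemma left_inv_aux {i : Bool} {e : Cov} (he : qE e ∈ U i) :
    echart (nn i (labE i e)) (pr (qE e)) = e := by
  have h := mem_sheet_of_mem_source he
  obtain ⟨x, hx⟩ := h
  rw [← hx]
  simp [lb_nn]

/-- The trivialization of `qE` over `U i`. -/
noncomputable def trivCov (i : Bool) : Bundle.Trivialization ℤ qE where
  toFun e := (qE e, labE i e)
  invFun p := echart (nn i p.2) (pr p.1)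
  source := qE ⁻¹' (U i)
  target := (U i) ×ˢ (Set.univ : Set ℤ)
  map_source' := by
    intro e he
    exact ⟨he, Set.mem_univ _⟩
  map_target' := by
    rintro ⟨l, k⟩ ⟨hl, -⟩
    show qE (echart (nn i k) (pr l)) ∈ U i
    rw [qE_echart, lb_nn]
    exact mem_U_self _ _
  left_inv' := by
    intro e he
    exact left_inv_aux he
  right_inv' := by
    rintro ⟨l, k⟩ ⟨hl, -⟩
    show (qE (echart (nn i k) (pr l)), labE i (echart (nn i k) (pr l))) = (l, k)
    rw [qE_echart, lb_nn, labE_echart_nn, chart_pr_eq hl]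
  open_source := (isOpen_U i).preimage continuous_qE
  open_target := ((isOpen_U i).prod isOpen_univ)
  continuousOn_toFun := by
    apply ContinuousOn.prodMk (continuous_qE.continuousOn)
    intro e he
    apply ContinuousAt.continuousWithinAt
    have hsh : e ∈ sheet i (labE i e) := mem_sheet_of_mem_source he
    have hnhds : sheet i (labE i e) ∈ nhds e := (isOpen_sheet i _).mem_nhds hsh
    have : labE i =ᶠ[nhds e] (fun _ => labE i e) := by
      filter_upwards [hnhds] with e' he'
      exact labE_eq_of_mem_sheet he'
    exact (continuousAt_congr this).2 continuousAt_const
  continuousOn_invFun := by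
    apply Continuous.continuousOn
    show Continuous fun p : LineTwoOrigins × ℤ => echart (nn i p.2) (pr p.1)
    have : (fun p : LineTwoOrigins × ℤ => echart (nn i p.2) (pr p.1)) =
        (Quotient.mk coverSetoid) ∘ (fun p => (pr p.1, nn i p.2)) := rfl
    rw [this]
    exact continuous_quotient_mk'.comp
      ((continuous_pr.comp continuous_fst).prodMk
        ((continuous_of_discreteTopology (f := nn i)).comp continuous_snd))
  baseSet := U i
  open_baseSet := isOpen_U i
  source_eq := rfl
  target_eq := rfl
  proj_toFun := fun _ _ => rfl

lemma isCoveringMap_qE : IsCoveringMap qE := by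
  classical
  apply IsCoveringMap.mk qE (fun _ => ℤ)
    (fun l => if l ∈ U false then trivCov false else trivCov true)
  intro l
  split_ifs with h
  · exact h
  · exact mem_U_of_not_mem l h

end LTO
namespace LTO

open Topology Set Metric

section Lifting

variable {Etot X : Type} [TopologicalSpace Etot] [TopologicalSpace X] {q : Etot → X}

/-- One step of lifting: over a single trivialization. -/
lemma step_lift {S F : Type} [TopologicalSpace S] [TopologicalSpace F]
    (T : Bundle.Trivialization F q) {G : S × ℝ → X} (hG : Continuous G) {a b : ℝ} (hab : a ≤ b)
    (hsub : ∀ z, ∀ t ∈ Set.Icc a b, G (z, t) ∈ T.baseSet)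
    {k : S → Etot} (hk : Continuous k) (hqk : ∀ z, q (k z) = G (z, a)) :
    ∃ K : S × ℝ → Etot, Continuous K ∧ (∀ z, ∀ t ∈ Set.Icc a b, q (K (z, t)) = G (z, t)) ∧
      (∀ z, K (z, a) = k z) ∧ (∀ z t, b ≤ t → K (z, t) = K (z, b)) ∧
      (∀ z t, t ≤ a → K (z, t) = k z) := by
  have hksrc : ∀ z, k z ∈ T.source := fun z =>
    T.mem_source.2 (by rw [hqk]; exact hsub z a ⟨le_refl a, hab⟩)
  set cl : ℝ → ℝ := fun t => max a (min b t) with hcl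
  have hclmem : ∀ t, cl t ∈ Set.Icc a b := fun t =>
    ⟨le_max_left _ _, max_le hab (min_le_left _ _)⟩
  have hcl_of_mem : ∀ t, t ∈ Set.Icc a b → cl t = t := fun t ht => by
    show max a (min b t) = t
    rw [min_eq_right ht.2, max_eq_right ht.1]
  refine ⟨fun zt => T.toOpenPartialHomeomorph.symm (G (zt.1, cl zt.2), (T (k zt.1)).2),
    ?_, ?_, ?_, ?_, ?_⟩
  · apply T.toOpenPartialHomeomorph.continuousOn_symm.comp_continuous
    · apply Continuous.prodMk
      · exact hG.comp (continuous_fst.prodMk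
          (continuous_const.max (continuous_const.min continuous_snd)))
      · have h1 : Continuous (fun zt : S × ℝ => k zt.1) := hk.comp continuous_fst
        have h2 : Continuous (⇑T.toOpenPartialHomeomorph ∘ (fun zt : S × ℝ => k zt.1)) :=
          ContinuousOn.comp_continuous T.toOpenPartialHomeomorph.continuousOn h1
            (fun zt => hksrc zt.1)
        exact continuous_snd.comp h2
    · intro zt
      rw [T.target_eq]
      exact ⟨hsub _ _ (hclmem zt.2), Set.mem_univ _⟩
  · intro z t ht
    have hc : cl t = t := hcl_of_mem t ht
    show q (T.toOpenPartialHomeomorph.symm (G (z, cl t), _)) = _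
    rw [hc]
    exact T.proj_symm_apply (by rw [T.target_eq]; exact ⟨hsub z t ht, Set.mem_univ _⟩)
  · intro z
    show T.toOpenPartialHomeomorph.symm (G (z, cl a), (T (k z)).2) = k z
    rw [hcl_of_mem a ⟨le_refl a, hab⟩, ← hqk z]
    exact T.symm_apply_mk_proj (hksrc z)
  · intro z t hbt
    have h1 : cl t = b := by
      show max a (min b t) = b
      rw [min_eq_left hbt, max_eq_right hab]
    have h2 : cl b = b := hcl_of_mem b ⟨hab, le_refl b⟩
    show T.toOpenPartialHomeomorph.symm (G (z, cl t), _) = T.toOpenPartialHomeomorph.symm (G (z, cl b), _)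
    rw [h1, h2]
  · intro z t hta
    have h1 : cl t = a := by
      show max a (min b t) = a
      rw [min_eq_right (hta.trans hab), max_eq_left hta]
    show T.toOpenPartialHomeomorph.symm (G (z, cl t), _) = k z
    rw [h1, ← hqk z]
    exact T.symm_apply_mk_proj (hksrc z)

/-- Lifting over a tube `S × [0,1]`, given a fine enough partition with trivializations. -/
lemma tube_lift {S : Type} [TopologicalSpace S]
    {G : S × ℝ → X} (hG : Continuous G) {n : ℕ} (hn : 0 < n)
    (hsub : ∀ m : ℕ, m < n → ∃ (x : X) (T : Bundle.Trivialization (q ⁻¹' {x}) q),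
      ∀ z, ∀ t ∈ Set.Icc ((m : ℝ)/n) (((m : ℝ)+1)/n), G (z, t) ∈ T.baseSet)
    {k : S → Etot} (hk : Continuous k) (hqk : ∀ z, q (k z) = G (z, 0)) :
    ∃ K : S × ℝ → Etot, Continuous K ∧
      (∀ z, ∀ t ∈ Set.Icc (0:ℝ) 1, q (K (z, t)) = G (z, t)) ∧
      (∀ z, K (z, 0) = k z) ∧ (∀ z t, 1 ≤ t → K (z, t) = K (z, 1)) ∧
      (∀ z t, t ≤ 0 → K (z, t) = k z) := by
  have hnR : (0:ℝ) < n := by exact_mod_cast hn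
  have key : ∀ m : ℕ, m ≤ n → ∃ K : S × ℝ → Etot, Continuous K ∧
      (∀ z, ∀ t ∈ Set.Icc (0:ℝ) ((m : ℝ)/n), q (K (z, t)) = G (z, t)) ∧
      (∀ z, K (z, 0) = k z) ∧ (∀ z t, (m : ℝ)/n ≤ t → K (z, t) = K (z, (m : ℝ)/n)) ∧
      (∀ z t, t ≤ 0 → K (z, t) = k z) := by
    intro m
    induction m with
    | zero =>
      intro _
      refine ⟨fun zt => k zt.1, hk.comp continuous_fst, ?_, fun z => rfl,
        fun z t _ => rfl, fun z t _ => rfl⟩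
      intro z t ht
      simp only [Nat.cast_zero, zero_div] at ht
      have : t = 0 := le_antisymm ht.2 ht.1
      rw [this, hqk]
    | succ m ih =>
      intro hmn
      obtain ⟨K₀, hK₀c, hK₀lift, hK₀bot, hK₀tail, hK₀head⟩ := ih (Nat.le_of_succ_le hmn)
      obtain ⟨x, T, hT⟩ := hsub m (Nat.lt_of_succ_le hmn)
      have h0m : (0:ℝ) ≤ (m:ℝ)/n := by positivity
      have hab : (m : ℝ)/n ≤ ((m : ℝ)+1)/n := by
        exact (div_le_div_iff_of_pos_right hnR).2 (by linarith)
      have hmlt : (m : ℝ)/n < ((m : ℝ)+1)/n := (div_lt_div_iff_of_pos_right hnR).2 (lt_add_one _)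
      have hk'c : Continuous (fun z => K₀ (z, (m : ℝ)/n)) :=
        hK₀c.comp (continuous_id.prodMk continuous_const)
      have hqk' : ∀ z, q (K₀ (z, (m : ℝ)/n)) = G (z, (m : ℝ)/n) := fun z =>
        hK₀lift z _ ⟨h0m, le_refl _⟩
      obtain ⟨K', hK'c, hK'lift, hK'bot, hK'tail, hK'head⟩ :=
        step_lift T hG hab hT hk'c hqk'
      have hcast : ((m + 1 : ℕ) : ℝ) = (m : ℝ) + 1 := by push_cast; ring
      refine ⟨fun zt => if zt.2 ≤ (m : ℝ)/n then K₀ zt else K' zt, ?_, ?_, ?_, ?_, ?_⟩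
      · apply Continuous.if_le hK₀c hK'c continuous_snd continuous_const
        rintro ⟨z, t⟩ ht
        dsimp only at ht ⊢
        rw [ht]
        exact (hK'bot z).symm
      · intro z t ht
        rw [hcast] at ht
        dsimp only
        by_cases hc : t ≤ (m : ℝ)/n
        · rw [if_pos hc]
          exact hK₀lift z t ⟨ht.1, hc⟩
        · rw [if_neg hc]
          exact hK'lift z t ⟨(not_le.1 hc).le, ht.2⟩
      · intro z
        dsimp only
        rw [if_pos h0m]
        exact hK₀bot z
      · intro z t ht
        rw [hcast] at ht ⊢
        dsimp only
        rw [if_neg (not_le.2 (lt_of_lt_of_le hmlt ht)), if_neg (not_le.2 hmlt)]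
        exact hK'tail z t ht
      · intro z t ht
        dsimp only
        rw [if_pos (ht.trans h0m)]
        exact hK₀head z t ht
  obtain ⟨K, hKc, hKlift, hKbot, hKtail, hKhead⟩ := key n (le_refl n)
  have hnn : ((n:ℝ))/n = 1 := div_self hnR.ne'
  rw [hnn] at hKlift hKtail
  exact ⟨K, hKc, hKlift, hKbot, hKtail, hKhead⟩

/-- A Lebesgue-number style partition for a vertical segment. -/
lemma exists_partition (hq : IsCoveringMap q) (hne : ∀ x, Nonempty (q ⁻¹' {x})) {G : ℝ × ℝ → X} (hG : Continuous G) (s₀ : ℝ) :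
    ∃ r : ℝ, 0 < r ∧ ∃ n : ℕ, 0 < n ∧ ∀ m : ℕ, m < n →
      ∃ (x : X) (T : Bundle.Trivialization (q ⁻¹' {x}) q), ∀ s : ℝ, |s - s₀| < r →
        ∀ t ∈ Set.Icc ((m : ℝ)/n) (((m : ℝ)+1)/n), G (s, t) ∈ T.baseSet := by
  classical
  haveI := hne
  set seg : Set (ℝ × ℝ) := {s₀} ×ˢ Set.Icc (0:ℝ) 1 with hseg
  have hcomp : IsCompact seg := isCompact_singleton.prod isCompact_Icc
  set c : X → Set (ℝ × ℝ) := fun x => G ⁻¹' (hq x).toTrivialization.baseSet with hc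
  have hopen : ∀ x, IsOpen (c x) := fun x =>
    ((hq x).toTrivialization.open_baseSet).preimage hG
  have hcover : seg ⊆ ⋃ x, c x := by
    intro p _
    exact Set.mem_iUnion.2 ⟨G p, (hq (G p)).mem_toTrivialization_baseSet⟩
  obtain ⟨δ, hδ, hball⟩ := lebesgue_number_lemma_of_metric hcomp hopen hcover
  obtain ⟨n, hn⟩ := exists_nat_gt (1/δ)
  have hn0 : 0 < n := by
    by_contra h
    push_neg at h
    interval_cases n
    simp only [Nat.cast_zero] at hn
    have : (0:ℝ) < 1/δ := by positivity
    linarith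
  have hnR : (0:ℝ) < n := by exact_mod_cast hn0
  have hinv : 1/(n:ℝ) < δ := by
    rw [div_lt_iff₀ hnR]
    rw [div_lt_iff₀ hδ] at hn
    linarith [hn]
  refine ⟨δ/2, half_pos hδ, n, hn0, ?_⟩
  intro m hm
  set p : ℝ × ℝ := (s₀, (2*(m:ℝ)+1)/(2*n)) with hp
  have hpseg : p ∈ seg := by
    constructor
    · exact Set.mem_singleton _
    · constructor
      · positivity
      · rw [div_le_one₀ (by positivity)]
        have : (m:ℝ) + 1 ≤ n := by exact_mod_cast hm
        linarith
  obtain ⟨x, hx⟩ := hball p hpseg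
  refine ⟨x, (hq x).toTrivialization, ?_⟩
  intro s hs t ht
  apply hx
  rw [Metric.mem_ball, Prod.dist_eq]
  have e1 : (2*(m:ℝ)+1)/(2*n) - 1/(2*n) = (m:ℝ)/n := by field_simp; ring
  have e2 : (2*(m:ℝ)+1)/(2*n) + 1/(2*n) = ((m:ℝ)+1)/n := by field_simp; ring
  have hhalf : 1/(2*(n:ℝ)) ≤ 1/n := by
    rw [div_le_div_iff₀ (by positivity) hnR]
    linarith
  have habs : |t - (2*(m:ℝ)+1)/(2*n)| ≤ 1/(2*n) := by
    rw [abs_le]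
    constructor
    · linarith [ht.1]
    · linarith [ht.2]
  apply max_lt
  · rw [Real.dist_eq]
    exact lt_of_lt_of_le hs (by linarith)
  · rw [Real.dist_eq]
    show |t - (2*(m:ℝ)+1)/(2*n)| < δ
    exact lt_of_le_of_lt habs (lt_of_le_of_lt hhalf hinv)

end Lifting

end LTO
namespace LTO

open Topology Set Metric

section Lifting2

variable {Etot X : Type} [TopologicalSpace Etot] [TopologicalSpace X] {q : Etot → X}

/-- Local lift over a strip around `s₀`, matching a given bottom lift. -/
lemma strip_lift (hq : IsCoveringMap q) (hne : ∀ x, Nonempty (q ⁻¹' {x})) {G : ℝ × ℝ → X} (hG : Continuous G)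
    (hclamp0 : ∀ s t, t ≤ 0 → G (s, t) = G (s, 0))
    (hclamp1 : ∀ s t, 1 ≤ t → G (s, t) = G (s, 1))
    {b : ℝ → Etot} (hb : Continuous b) (hqb : ∀ s, q (b s) = G (s, 0)) (s₀ : ℝ) :
    ∃ r : ℝ, 0 < r ∧ ∃ K : ℝ × ℝ → Etot, Continuous K ∧
      (∀ s t, |s - s₀| < r → q (K (s, t)) = G (s, t)) ∧
      (∀ s, |s - s₀| < r → K (s, 0) = b s) := by
  obtain ⟨r, hr, n, hn, hpart⟩ := exists_partition hq hne hG s₀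
  -- clamp the horizontal coordinate to the closed strip of half width r/2
  set cl : ℝ → ℝ := fun s => max (s₀ - r/2) (min (s₀ + r/2) s) with hcl
  have hclcont : Continuous cl := continuous_const.max (continuous_const.min continuous_id)
  have hclmem : ∀ s, |cl s - s₀| < r := by
    intro s
    rw [abs_lt]
    constructor
    · have : s₀ - r/2 ≤ cl s := le_max_left _ _
      linarith
    · have : cl s ≤ s₀ + r/2 := max_le (by linarith) (min_le_left _ _)
      linarith
  have hcl_eq : ∀ s, |s - s₀| < r/2 → cl s = s := by
    intro s hs
    rw [abs_lt] at hs
    show max (s₀ - r/2) (min (s₀ + r/2) s) = s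
    rw [min_eq_right (by linarith), max_eq_right (by linarith)]
  set G' : ℝ × ℝ → X := fun p => G (cl p.1, p.2) with hG'
  have hG'c : Continuous G' := hG.comp ((hclcont.comp continuous_fst).prodMk continuous_snd)
  have hsub : ∀ m : ℕ, m < n → ∃ (x : X) (T : Bundle.Trivialization (q ⁻¹' {x}) q),
      ∀ z : ℝ, ∀ t ∈ Set.Icc ((m : ℝ)/n) (((m : ℝ)+1)/n), G' (z, t) ∈ T.baseSet := by
    intro m hm
    obtain ⟨x, T, hT⟩ := hpart m hm
    exact ⟨x, T, fun z t ht => hT (cl z) (hclmem z) t ht⟩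
  have hqb' : ∀ z : ℝ, q (b (cl z)) = G' (z, 0) := fun z => hqb (cl z)
  obtain ⟨K, hKc, hKlift, hKbot, hKtail, hKhead⟩ :=
    tube_lift (q := q) hG'c hn hsub (hb.comp hclcont) hqb'
  refine ⟨r/2, half_pos hr, K, hKc, ?_, ?_⟩
  · intro s t hs
    rcases le_or_gt t 1 with h1 | h1
    · rcases le_or_gt 0 t with h0 | h0
      · have := hKlift s t ⟨h0, h1⟩
        rw [this]
        show G (cl s, t) = G (s, t)
        rw [hcl_eq s hs]
      · rw [hKhead s t h0.le]
        show q (b (cl s)) = G (s, t)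
        rw [hqb (cl s)]
        rw [hcl_eq s hs, hclamp0 s t h0.le]
    · rw [hKtail s t h1.le]
      have := hKlift s 1 ⟨zero_le_one, le_refl 1⟩
      rw [this]
      show G (cl s, 1) = G (s, t)
      rw [hcl_eq s hs, hclamp1 s t h1.le]
  · intro s hs
    rw [hKbot s]
    show b (cl s) = b s
    rw [hcl_eq s hs]

end Lifting2

end LTO
namespace LTO

open Topology Set Metric

section Lifting3

variable {Etot X : Type} [TopologicalSpace Etot] [TopologicalSpace X] {q : Etot → X}

/-- Lifting of a square (clamped in both directions) along a covering map. -/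
theorem square_lift (hq : IsCoveringMap q) (hne : ∀ x, Nonempty (q ⁻¹' {x})) {G : ℝ × ℝ → X} (hG : Continuous G)
    (hclamp0 : ∀ s t, t ≤ 0 → G (s, t) = G (s, 0))
    (hclamp1 : ∀ s t, 1 ≤ t → G (s, t) = G (s, 1))
    (hcs0 : ∀ s t, s ≤ 0 → G (s, t) = G (0, t))
    (hcs1 : ∀ s t, 1 ≤ s → G (s, t) = G (1, t))
    (e₀ : Etot) (he₀ : q e₀ = G (0, 0)) :
    ∃ H : ℝ × ℝ → Etot, Continuous H ∧ (∀ s t, q (H (s, t)) = G (s, t)) ∧ H (0, 0) = e₀ := by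
  classical
  -- Step 1: lift the bottom edge.
  obtain ⟨b, hbc, hqb, hb0⟩ : ∃ b : ℝ → Etot, Continuous b ∧ (∀ s, q (b s) = G (s, 0)) ∧
      b 0 = e₀ := by
    set Gs : ℝ × ℝ → X := fun p => G (p.2, 0) with hGs
    have hGsc : Continuous Gs := hG.comp ((continuous_snd).prodMk continuous_const)
    obtain ⟨r, hr, n, hn, hpart⟩ := exists_partition hq hne hGsc 0
    set Gp : PUnit × ℝ → X := fun p => G (p.2, 0) with hGp
    have hGpc : Continuous Gp := hG.comp ((continuous_snd).prodMk continuous_const)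
    have hsub : ∀ m : ℕ, m < n → ∃ (x : X) (T : Bundle.Trivialization (q ⁻¹' {x}) q),
        ∀ z : PUnit, ∀ t ∈ Set.Icc ((m : ℝ)/n) (((m : ℝ)+1)/n), Gp (z, t) ∈ T.baseSet := by
      intro m hm
      obtain ⟨x, T, hT⟩ := hpart m hm
      exact ⟨x, T, fun z t ht => hT 0 (by simpa using hr) t ht⟩
    have hqk : ∀ z : PUnit, q e₀ = Gp (z, 0) := fun z => he₀
    obtain ⟨K, hKc, hKlift, hKbot, hKtail, hKhead⟩ :=
      tube_lift (q := q) hGpc hn hsub (continuous_const : Continuous fun _ : PUnit => e₀) hqk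
    refine ⟨fun s => K (PUnit.unit, s), hKc.comp (continuous_const.prodMk continuous_id), ?_,
      hKbot _⟩
    intro s
    show q (K (PUnit.unit, s)) = G (s, 0)
    rcases le_or_gt s 0 with h0 | h0
    · rw [hKhead _ s h0, he₀, ← hcs0 s 0 h0]
    · rcases le_or_gt s 1 with h1 | h1
      · exact hKlift _ s ⟨h0.le, h1⟩
      · rw [hKtail PUnit.unit s h1.le]
        have := hKlift PUnit.unit 1 ⟨zero_le_one, le_refl 1⟩
        rw [this]
        show G (1, 0) = G (s, 0)
        rw [hcs1 s 0 h1.le]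
  -- Step 2: local strip lifts, glued by vertical uniqueness.
  have hstrip := fun s₀ => strip_lift hq hne hG hclamp0 hclamp1 hbc hqb s₀
  choose r hrpos K hKc hKlift hKbot using hstrip
  set H : ℝ × ℝ → Etot := fun p => K p.1 p with hH
  have hHq : ∀ s t, q (H (s, t)) = G (s, t) := by
    intro s t
    exact hKlift s s t (by simp [hrpos s])
  have hHbot : ∀ s, H (s, 0) = b s := by
    intro s
    exact hKbot s s (by simp [hrpos s])
  have hagree : ∀ s₁ s : ℝ, |s - s₁| < r s₁ → ∀ t, H (s, t) = K s₁ (s, t) := by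
    intro s₁ s hs
    have h1 : Continuous (fun t => H (s, t)) :=
      (hKc s).comp (continuous_const.prodMk continuous_id)
    have h2 : Continuous (fun t => K s₁ (s, t)) :=
      (hKc s₁).comp (continuous_const.prodMk continuous_id)
    have he : q ∘ (fun t => H (s, t)) = q ∘ (fun t => K s₁ (s, t)) := by
      funext t
      show q (H (s, t)) = q (K s₁ (s, t))
      rw [hHq s t, hKlift s₁ s t hs]
    have ha : H (s, 0) = K s₁ (s, 0) := by
      rw [hHbot s, hKbot s₁ s hs]
    have := hq.eq_of_comp_eq h1 h2 he 0 ha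
    intro t
    exact congrFun this t
  have hHc : Continuous H := by
    rw [continuous_iff_continuousAt]
    rintro ⟨s₁, t₁⟩
    have hopen : IsOpen {p : ℝ × ℝ | |p.1 - s₁| < r s₁} := by
      have : {p : ℝ × ℝ | |p.1 - s₁| < r s₁} = (fun p : ℝ × ℝ => p.1) ⁻¹' (ball s₁ (r s₁)) := by
        ext p
        simp [Metric.mem_ball, Real.dist_eq]
      rw [this]
      exact isOpen_ball.preimage continuous_fst
    have hmem : (s₁, t₁) ∈ {p : ℝ × ℝ | |p.1 - s₁| < r s₁} := by
      simp [hrpos s₁]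
    have hev : (K s₁) =ᶠ[nhds (s₁, t₁)] H := by
      filter_upwards [hopen.mem_nhds hmem] with p hp
      exact (hagree s₁ p.1 hp p.2).symm
    exact ContinuousAt.congr ((hKc s₁).continuousAt) hev
  refine ⟨H, hHc, hHq, ?_⟩
  rw [hHbot 0, hb0]

end Lifting3

end LTO
namespace LTO

open Topology Set Metric

/-- The clamp to `[0,1]`. -/
noncomputable def cl01 (s : ℝ) : ℝ := max 0 (min 1 s)

lemma continuous_cl01 : Continuous cl01 := continuous_const.max (continuous_const.min continuous_id)

lemma cl01_of_nonpos {s : ℝ} (h : s ≤ 0) : cl01 s = 0 := by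
  rw [cl01, min_eq_right (by linarith), max_eq_left h]

lemma cl01_of_one_le {s : ℝ} (h : 1 ≤ s) : cl01 s = 1 := by
  rw [cl01, min_eq_left h, max_eq_right zero_le_one]

lemma cl01_half : cl01 (1/2) = 1/2 := by
  rw [cl01, min_eq_right (by norm_num), max_eq_right (by norm_num)]

/-- The basic loop in the line with two origins. -/
noncomputable def loopL (s : ℝ) : LineTwoOrigins :=
  if s ≤ 1/2 then chart false (1 - 4 * cl01 s) else chart true (4 * cl01 s - 3)

/-- Its lift to the cover, starting on sheet `0`. -/
noncomputable def loopE (s : ℝ) : Cov :=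
  if s ≤ 1/2 then echart 0 (1 - 4 * cl01 s) else echart (-1) (4 * cl01 s - 3)

lemma continuous_loopL : Continuous loopL := by
  apply Continuous.if_le
  · exact (continuous_chart false).comp
      (continuous_const.sub (continuous_const.mul continuous_cl01))
  · exact (continuous_chart true).comp
      ((continuous_const.mul continuous_cl01).sub continuous_const)
  · exact continuous_id
  · exact continuous_const
  · intro s hs
    rw [hs, cl01_half]
    norm_num
    exact chart_eq_chart (by norm_num)

lemma continuous_loopE : Continuous loopE := by
  apply Continuous.if_le
  · exact (continuous_echart 0).comp
      (continuous_const.sub (continuous_const.mul continuous_cl01))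
  · exact (continuous_echart (-1)).comp
      ((continuous_const.mul continuous_cl01).sub continuous_const)
  · exact continuous_id
  · exact continuous_const
  · intro s hs
    rw [hs, cl01_half]
    norm_num
    apply Quotient.sound
    exact ⟨rfl, Or.inr (Or.inr ⟨by norm_num, by decide⟩)⟩

lemma qE_loopE : ∀ s, qE (loopE s) = loopL s := by
  intro s
  rw [loopE, loopL]
  split_ifs with h
  · rw [qE_echart]
    congr 1
  · rw [qE_echart]
    congr 1

@[simp] lemma loopL_zero : loopL 0 = chart false 1 := by
  rw [loopL, if_pos (by norm_num), cl01_of_nonpos (le_refl 0)]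
  norm_num

@[simp] lemma loopL_one : loopL 1 = chart true 1 := by
  rw [loopL, if_neg (by norm_num), cl01_of_one_le (le_refl 1)]
  norm_num

@[simp] lemma loopE_zero : loopE 0 = echart 0 1 := by
  rw [loopE, if_pos (by norm_num), cl01_of_nonpos (le_refl 0)]
  norm_num

@[simp] lemma loopE_one : loopE 1 = echart (-1) 1 := by
  rw [loopE, if_neg (by norm_num), cl01_of_one_le (le_refl 1)]
  norm_num

lemma loopL_of_nonpos {s : ℝ} (h : s ≤ 0) : loopL s = loopL 0 := by
  rw [loopL_zero, loopL, if_pos (by linarith [h] : s ≤ 1/2), cl01_of_nonpos h]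
  norm_num

lemma loopL_of_one_le {s : ℝ} (h : 1 ≤ s) : loopL s = loopL 1 := by
  rw [loopL_one, loopL, if_neg (by push_neg; linarith [h] : ¬ s ≤ 1/2), cl01_of_one_le h]
  norm_num

lemma loopL_ends : loopL 0 = loopL 1 := by
  rw [loopL_zero, loopL_one]
  exact chart_eq_chart one_ne_zero

lemma endpoints_ne : (echart 0 1 : Cov) ≠ echart (-1) 1 := by
  intro h
  obtain ⟨-, h2⟩ := Quotient.exact h
  rcases h2 with h2 | ⟨-, h2⟩ | ⟨h1, -⟩
  · exact absurd h2 (by norm_num)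
  · dsimp at h2
    omega
  · dsimp at h1
    linarith

lemma lb_zero : lb 0 = false := rfl

lemma lb_neg_one : lb (-1) = true := by decide

end LTO
namespace LTO

open Topology Set Metric

theorem main (Y : Type*) [TopologicalSpace Y] [T2Space Y]
    (he : ContinuousMap.HomotopyEquiv LineTwoOrigins Y) : False := by
  classical
  set f : C(LineTwoOrigins, Y) := he.toFun with hf
  set g : C(Y, LineTwoOrigins) := he.invFun with hg
  set h : C(LineTwoOrigins, LineTwoOrigins) := g.comp f with hh
  -- the two origins are merged by `f`, hence by `h`
  have hmerge : f (chart false 0) = f (chart true 0) := by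
    by_contra hne
    obtain ⟨u, v, hu, hv, hxu, hyv, huv⟩ := t2_separation hne
    obtain ⟨w, hw1, hw2⟩ := origins_not_separated (hu.preimage f.continuous)
      (hv.preimage f.continuous) hxu hyv
    exact Set.disjoint_left.1 huv hw1 hw2
  have hmergeh : h (chart false 0) = h (chart true 0) := by
    show g (f (chart false 0)) = g (f (chart true 0))
    rw [hmerge]
  set c : LineTwoOrigins := h (chart false 0) with hc
  have hfactor : ∀ l, h (chart false (pr l)) = h l := by
    intro l
    obtain ⟨x, i, rfl⟩ := rep l
    rw [pr_chart]
    rcases eq_or_ne x 0 with rfl | hx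
    · cases i
      · rfl
      · exact hmergeh
    · rw [chart_eq_chart hx]
  -- homotopy from the identity to the constant map `c`
  have hhtpy : (ContinuousMap.id LineTwoOrigins).Homotopic
      (ContinuousMap.const LineTwoOrigins c) := by
    refine he.left_inv.symm.trans ⟨?_⟩
    exact
      { toFun := fun p => h (chart false ((1 - (p.1 : ℝ)) * pr p.2))
        continuous_toFun := by
          apply h.continuous.comp
          apply (continuous_chart false).comp
          exact (continuous_const.sub (continuous_subtype_val.comp continuous_fst)).mul
            (continuous_pr.comp continuous_snd)
        map_zero_left := by
          intro x
          simp only [ContinuousMap.coe_mk, Set.Icc.coe_zero, sub_zero, one_mul]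
          exact hfactor x
        map_one_left := by
          intro x
          simp only [ContinuousMap.coe_mk, Set.Icc.coe_one, sub_self, zero_mul]
          rfl }
  obtain ⟨H⟩ := hhtpy
  -- the square map
  set G : ℝ × ℝ → LineTwoOrigins :=
    fun p => H (Set.projIcc (0:ℝ) 1 zero_le_one p.2, loopL p.1) with hG
  have hGc : Continuous G := H.continuous.comp
    ((continuous_projIcc.comp continuous_snd).prodMk (continuous_loopL.comp continuous_fst))
  have hGbot : ∀ s, G (s, 0) = loopL s := by
    intro s
    show H (Set.projIcc (0:ℝ) 1 zero_le_one 0, loopL s) = loopL s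
    rw [Set.projIcc_left]
    exact H.apply_zero (loopL s)
  have hGtop : ∀ s, G (s, 1) = c := by
    intro s
    show H (Set.projIcc (0:ℝ) 1 zero_le_one 1, loopL s) = c
    rw [Set.projIcc_right]
    exact H.apply_one (loopL s)
  have hclamp0 : ∀ s t, t ≤ 0 → G (s, t) = G (s, 0) := by
    intro s t ht
    show H (Set.projIcc (0:ℝ) 1 zero_le_one t, loopL s) = _
    rw [Set.projIcc_of_le_left _ ht, ← Set.projIcc_left (h := zero_le_one)]
  have hclamp1 : ∀ s t, 1 ≤ t → G (s, t) = G (s, 1) := by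
    intro s t ht
    show H (Set.projIcc (0:ℝ) 1 zero_le_one t, loopL s) = _
    rw [Set.projIcc_of_right_le _ ht, ← Set.projIcc_right (h := zero_le_one)]
  have hcs0 : ∀ s t, s ≤ 0 → G (s, t) = G (0, t) := by
    intro s t hs
    show H (_, loopL s) = H (_, loopL 0)
    rw [loopL_of_nonpos hs]
  have hcs1 : ∀ s t, 1 ≤ s → G (s, t) = G (1, t) := by
    intro s t hs
    show H (_, loopL s) = H (_, loopL 1)
    rw [loopL_of_one_le hs]
  have he₀ : qE (echart 0 1) = G (0, 0) := by
    rw [hGbot 0, loopL_zero, qE_echart, lb_zero]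
  -- lift the square
  obtain ⟨HL, hHLc, hHLq, hHL0⟩ :=
    square_lift isCoveringMap_qE (fun l => by
      obtain ⟨x, i, rfl⟩ := rep l
      exact ⟨⟨echart (nn i 0) x, by show qE (echart (nn i 0) x) = chart i x; rw [qE_echart, lb_nn]⟩⟩)
      hGc hclamp0 hclamp1 hcs0 hcs1 (echart 0 1) he₀
  -- identify the bottom edge with the explicit lift of the loop
  have hbot : (fun s => HL (s, 0)) = loopE := by
    apply isCoveringMap_qE.eq_of_comp_eq
      (hHLc.comp (continuous_id.prodMk continuous_const)) continuous_loopE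
    · funext s
      show qE (HL (s, 0)) = qE (loopE s)
      rw [hHLq s 0, hGbot s, qE_loopE]
    · show HL (0, 0) = loopE 0
      rw [hHL0, loopE_zero]
  -- the top edge is constant
  have htop : HL (0, 1) = HL (1, 1) := by
    apply isCoveringMap_qE.const_of_comp
      (hHLc.comp (continuous_id.prodMk continuous_const))
    intro a a'
    show qE (HL (a, 1)) = qE (HL (a', 1))
    rw [hHLq a 1, hHLq a' 1, hGtop, hGtop]
  -- vertical uniqueness on the two side edges
  have hside : (fun t => HL (0, t)) = (fun t => HL (1, t)) := by
    apply isCoveringMap_qE.eq_of_comp_eq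
      (hHLc.comp (continuous_const.prodMk continuous_id))
      (hHLc.comp (continuous_const.prodMk continuous_id))
    · funext t
      show qE (HL (0, t)) = qE (HL (1, t))
      rw [hHLq 0 t, hHLq 1 t]
      show H (_, loopL 0) = H (_, loopL 1)
      rw [loopL_ends]
    · exact htop
  have hcorner : HL (0, 0) = HL (1, 0) := congrFun hside 0
  have h1 : HL (1, 0) = loopE 1 := congrFun hbot 1
  rw [hHL0, h1, loopE_one] at hcorner
  exact endpoints_ne hcorner

end LTO

/-- The line with two origins does not have the homotopy type of a CW complex: there is
no Hausdorff space `Y` with a CW-complex structure on all of `Y` that is homotopy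
equivalent to `LineTwoOrigins`. -/
theorem lineTwoOrigins_not_homotopyEquiv_cwComplex (Y : Type u) [TopologicalSpace Y]
    [T2Space Y] (cw : Topology.LegacyCWComplex (Set.univ : Set Y)) :
    IsEmpty (ContinuousMap.HomotopyEquiv LineTwoOrigins Y) := by
  exact ⟨fun he => LTO.main Y he⟩
end
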